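/- arXiv:2210.06767 — 2 statements merged into one kernel-verified Lean document; each statement's English description precedes it below -/
import Mathlib

section
/- Let s > 0 be real, N ≥ 1, let ν be a finite Borel measure on ℚ_p^N with ∫_{ℚ_p^N} max(1, max_i |y_i|_p)^s dν(y) < ∞, and let w, w′ : ℚ_p^N → [0, ∞) be bounded Borel functions. If ∫_{ℚ_p^N} |1 + Σ_{i=1}^N λ_i y_i|_p^s · w(y) dν(y) = ∫_{ℚ_p^N} |1 + Σ_{i=1}^N λ_i y_i|_p^s · w′(y) dν(y) for every λ = (λ_1, …, λ_N) ∈ ℚ_p^N, then w = w′ holds ν-almost everywhere. -/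
open MeasureTheory
open scoped ENNReal
open Filter Topology

noncomputable instance (p : ℕ) [Fact p.Prime] : MeasurableSpace ℚ_[p] := borel _
instance (p : ℕ) [Fact p.Prime] : BorelSpace ℚ_[p] := ⟨rfl⟩

instance (p : ℕ) [Fact p.Prime] : TopologicalSpace.SeparableSpace ℚ_[p] :=
  ⟨⟨Set.range ((↑) : ℚ → ℚ_[p]), Set.countable_range _, by
    rw [dense_iff_closure_eq, Set.eq_univ_iff_forall]
    intro x
    refine Metric.mem_closure_iff.2 fun ε hε => ?_
    obtain ⟨r, hr⟩ := Padic.rat_dense p x hε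
    exact ⟨r, Set.mem_range_self _, by simpa [dist_eq_norm] using hr⟩⟩⟩

namespace Stmt11Aux



variable {p : ℕ} [hp : Fact p.Prime]

lemma one_lt_P : (1:ℝ) < (p:ℝ) := by exact_mod_cast hp.out.one_lt
lemma P_pos : (0:ℝ) < (p:ℝ) := lt_trans one_pos one_lt_P
lemma Pinv_lt_one : (p:ℝ)⁻¹ < 1 := inv_lt_one_of_one_lt₀ one_lt_P
lemma Pinv_pos : (0:ℝ) < (p:ℝ)⁻¹ := inv_pos.2 P_pos

/-- κ = p^{-s} -/
noncomputable def kap (p : ℕ) (s : ℝ) : ℝ := ((p:ℝ)⁻¹) ^ s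

lemma kap_pos (s : ℝ) : 0 < kap p s := Real.rpow_pos_of_pos Pinv_pos s
lemma kap_lt_one {s : ℝ} (hs : 0 < s) : kap p s < 1 :=
  Real.rpow_lt_one Pinv_pos.le Pinv_lt_one hs

/-- E m -/
noncomputable def Efun (p : ℕ) (s : ℝ) : ℕ → ℝ
  | 0 => 0
  | (m+1) => ((p:ℝ) - 1) * (p:ℝ) ^ m + kap p s * Efun p s m

lemma norm_add_eq_left {a b : ℚ_[p]} (h : ‖b‖ < ‖a‖) : ‖a + b‖ = ‖a‖ := by
  rw [Padic.add_eq_max_of_ne h.ne']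
  exact max_eq_left h.le

lemma norm_natCast_le_one (n : ℕ) : ‖(n : ℚ_[p])‖ ≤ 1 := by
  have := Padic.norm_int_le_one (p := p) (n : ℤ)
  simpa using this

lemma norm_sum_le_of_le {ι : Type*} (t : Finset ι) (f : ι → ℚ_[p]) {R : ℝ} (hR : 0 ≤ R)
    (h : ∀ i ∈ t, ‖f i‖ ≤ R) : ‖∑ i ∈ t, f i‖ ≤ R :=
  IsUltrametricDist.norm_sum_le_of_forall_le_of_nonneg hR h

/-- the 1-dimensional counting estimate -/
lemma oneD {s : ℝ} (hs : 0 < s) :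
    ∀ (m : ℕ) (u : ℚ_[p]), ‖u‖ ≤ 1 →
      Efun p s m ≤ (∑ j ∈ Finset.range (p ^ m), ‖u + (j : ℚ_[p])‖ ^ s) ∧
      (∑ j ∈ Finset.range (p ^ m), ‖u + (j : ℚ_[p])‖ ^ s) ≤ Efun p s m + (kap p s) ^ m := by
  intro m
  induction m with
  | zero =>
    intro u hu
    simp only [pow_zero, Finset.range_one, Finset.sum_singleton, Nat.cast_zero, add_zero, Efun]
    constructor
    · positivity
    · simpa using Real.rpow_le_one (norm_nonneg u) hu hs.le
  | succ m IH =>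
    intro u hu
    have hppos : 0 < p := hp.out.pos
    set x : ℤ_[p] := ⟨-u, by simpa using hu⟩ with hxdef
    set j0 : ℕ := x.appr 1 with hj0def
    have hj0lt : j0 < p := by simpa using x.appr_lt 1
    obtain ⟨t, ht⟩ : ∃ t : ℤ_[p], x - (j0 : ℤ_[p]) = (p : ℤ_[p]) * t := by
      have h1 := x.appr_spec 1
      rw [Ideal.mem_span_singleton] at h1
      obtain ⟨t, ht⟩ := h1
      exact ⟨t, by simpa [pow_one] using ht⟩
    set v : ℚ_[p] := -(t : ℚ_[p]) with hvdef
    have hv : ‖v‖ ≤ 1 := by rw [hvdef, norm_neg]; exact t.2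
    have hsplit : u + (j0 : ℚ_[p]) = (p : ℚ_[p]) * v := by
      have := congrArg (fun z : ℤ_[p] => (z : ℚ_[p])) ht
      push_cast at this
      rw [hvdef]
      linear_combination -this
    have hj0norm : ‖u + (j0 : ℚ_[p])‖ ≤ (p:ℝ)⁻¹ := by
      rw [hsplit, norm_mul, Padic.norm_p]
      calc (p:ℝ)⁻¹ * ‖v‖ ≤ (p:ℝ)⁻¹ * 1 := by
            exact mul_le_mul_of_nonneg_left hv Pinv_pos.le
        _ = (p:ℝ)⁻¹ := mul_one _
    have hnonspec : ∀ j1 : ℕ, j1 < p → j1 ≠ j0 → ‖u + (j1 : ℚ_[p])‖ = 1 := by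
      intro j1 hj1lt hne
      have hle : ‖u + (j1 : ℚ_[p])‖ ≤ 1 :=
        le_trans (IsUltrametricDist.norm_add_le_max _ _)
          (max_le hu (norm_natCast_le_one j1))
      rcases lt_or_eq_of_le hle with hlt | heq
      · exfalso
        have hdiff : ‖(((j1:ℤ) - (j0:ℤ) : ℤ) : ℚ_[p])‖ < 1 := by
          have : (((j1:ℤ) - (j0:ℤ) : ℤ) : ℚ_[p]) = (u + (j1:ℚ_[p])) - (u + (j0:ℚ_[p])) := by
            push_cast; ring
          rw [this, sub_eq_add_neg]
          refine lt_of_le_of_lt (IsUltrametricDist.norm_add_le_max _ _) ?_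
          rw [norm_neg]
          exact max_lt hlt (lt_of_le_of_lt hj0norm Pinv_lt_one)
        rw [Padic.norm_intCast_lt_one_iff] at hdiff
        have habs : |(j1:ℤ) - (j0:ℤ)| < (p:ℤ) := by
          rw [abs_lt]; omega
        have := Int.eq_zero_of_abs_lt_dvd hdiff habs
        omega
      · exact heq
    -- reindex the sum
    have hre : ∑ j ∈ Finset.range (p ^ (m+1)), ‖u + (j:ℚ_[p])‖ ^ s
        = ∑ x ∈ Finset.range p ×ˢ Finset.range (p ^ m), ‖u + ((x.1 + p * x.2 : ℕ) : ℚ_[p])‖ ^ s := by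
      refine Finset.sum_nbij' (fun j => (j % p, j / p)) (fun x => x.1 + p * x.2) ?_ ?_ ?_ ?_ ?_
      · intro j hj
        rw [Finset.mem_range, pow_succ] at hj
        rw [Finset.mem_product, Finset.mem_range, Finset.mem_range]
        exact ⟨Nat.mod_lt _ hppos, Nat.div_lt_of_lt_mul (by linarith [hj])⟩
      · intro a ha
        rw [Finset.mem_product, Finset.mem_range, Finset.mem_range] at ha
        rw [Finset.mem_range, pow_succ]
        calc a.1 + p * a.2 < p + p * a.2 := by omega
          _ ≤ p * (a.2 + 1) := by ring_nf; omega
          _ ≤ p * p ^ m := by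
              have : a.2 + 1 ≤ p ^ m := ha.2
              exact Nat.mul_le_mul_left p this
          _ = p ^ m * p := Nat.mul_comm _ _
      · intro j _; exact Nat.mod_add_div j p
      · intro a ha
        rw [Finset.mem_product, Finset.mem_range, Finset.mem_range] at ha
        ext
        · simp [Nat.add_mul_mod_self_left, Nat.mod_eq_of_lt ha.1]
        · simp [Nat.add_mul_div_left _ _ hppos, Nat.div_eq_of_lt ha.1]
      · intro j _
        rw [Nat.mod_add_div j p]
    rw [hre, Finset.sum_product]
    have hj0mem : j0 ∈ Finset.range p := Finset.mem_range.2 hj0lt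
    rw [← Finset.add_sum_erase _ _ hj0mem]
    -- special slice
    have hinner0 : (∑ j' ∈ Finset.range (p^m), ‖u + ((j0 + p * j' : ℕ) : ℚ_[p])‖ ^ s)
        = kap p s * ∑ j' ∈ Finset.range (p^m), ‖v + (j' : ℚ_[p])‖ ^ s := by
      rw [Finset.mul_sum]
      refine Finset.sum_congr rfl fun j' _ => ?_
      have harg : u + ((j0 + p * j' : ℕ) : ℚ_[p]) = (p : ℚ_[p]) * (v + (j' : ℚ_[p])) := by
        push_cast
        rw [mul_add, ← hsplit]; ring
      rw [harg, norm_mul, Padic.norm_p,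
        Real.mul_rpow Pinv_pos.le (norm_nonneg _)]
      rfl
    -- nonspecial slices
    have hinner1 : ∀ j1 ∈ (Finset.range p).erase j0,
        (∑ j' ∈ Finset.range (p^m), ‖u + ((j1 + p * j' : ℕ) : ℚ_[p])‖ ^ s) = (p:ℝ) ^ m := by
      intro j1 hj1
      obtain ⟨hne, hmem⟩ := Finset.mem_erase.1 hj1
      have hj1lt := Finset.mem_range.1 hmem
      have hterm : ∀ j' : ℕ, j' ∈ Finset.range (p^m) →
          ‖u + ((j1 + p * j' : ℕ) : ℚ_[p])‖ ^ s = 1 := by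
        intro j' _
        have harg : u + ((j1 + p * j' : ℕ) : ℚ_[p])
            = (u + (j1 : ℚ_[p])) + (p : ℚ_[p]) * (j' : ℚ_[p]) := by push_cast; ring
        have hsmall : ‖(p : ℚ_[p]) * (j' : ℚ_[p])‖ < ‖u + (j1 : ℚ_[p])‖ := by
          rw [hnonspec j1 hj1lt hne, norm_mul, Padic.norm_p]
          calc (p:ℝ)⁻¹ * ‖(j' : ℚ_[p])‖ ≤ (p:ℝ)⁻¹ * 1 :=
                mul_le_mul_of_nonneg_left (norm_natCast_le_one j') Pinv_pos.le
            _ = (p:ℝ)⁻¹ := mul_one _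
            _ < 1 := Pinv_lt_one
        rw [harg, norm_add_eq_left hsmall, hnonspec j1 hj1lt hne, Real.one_rpow]
      rw [Finset.sum_congr rfl hterm, Finset.sum_const, Finset.card_range, nsmul_eq_mul,
        mul_one]
      push_cast; ring
    rw [Finset.sum_congr rfl hinner1, hinner0, Finset.sum_const, Finset.card_erase_of_mem hj0mem,
      Finset.card_range, nsmul_eq_mul]
    have hcard : ((p - 1 : ℕ) : ℝ) = (p:ℝ) - 1 := by
      have : 1 ≤ p := hppos
      push_cast [Nat.cast_sub this]; ring
    obtain ⟨hlo, hhi⟩ := IH v hv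
    have hκ := kap_pos (p := p) s
    constructor
    · show Efun p s (m+1) ≤ _
      rw [Efun, hcard]
      have : kap p s * Efun p s m ≤ kap p s * ∑ j' ∈ Finset.range (p^m), ‖v + (j' : ℚ_[p])‖ ^ s :=
        mul_le_mul_of_nonneg_left hlo hκ.le
      linarith
    · show _ ≤ Efun p s (m+1) + kap p s ^ (m+1)
      rw [Efun, hcard]
      have : kap p s * (∑ j' ∈ Finset.range (p^m), ‖v + (j' : ℚ_[p])‖ ^ s)
          ≤ kap p s * (Efun p s m + kap p s ^ m) := mul_le_mul_of_nonneg_left hhi hκ.le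
      rw [mul_add] at this
      have hpow : kap p s * kap p s ^ m = kap p s ^ (m+1) := by ring
      linarith [this, hpow]



section Part2

/-- the constant c_s -/
noncomputable def cst (p : ℕ) (s : ℝ) : ℝ := ((p:ℝ) - 1)/((p:ℝ) - kap p s)
/-- the ratio q -/
noncomputable def qv (p : ℕ) (s : ℝ) : ℝ := kap p s / (p:ℝ)

variable {s : ℝ}

lemma P_sub_kap_pos (hs : 0 < s) : 0 < (p:ℝ) - kap p s := by
  have := kap_lt_one (p := p) hs; have := one_lt_P (p := p); linarith

lemma cst_pos (hs : 0 < s) : 0 < cst p s :=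
  div_pos (by linarith [one_lt_P (p := p)]) (P_sub_kap_pos hs)

lemma cst_lt_one (hs : 0 < s) : cst p s < 1 := by
  rw [cst, div_lt_one (P_sub_kap_pos hs)]
  linarith [kap_pos (p := p) s, kap_lt_one (p := p) hs]

lemma qv_pos (hs : 0 < s) : 0 < qv p s :=
  div_pos (kap_pos s) (by linarith [one_lt_P (p := p)])

lemma qv_lt_one (hs : 0 < s) : qv p s < 1 := by
  rw [qv, div_lt_one (by linarith [one_lt_P (p := p)])]
  calc kap p s < 1 := kap_lt_one hs
    _ < (p:ℝ) := one_lt_P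

lemma Efun_closed (hs : 0 < s) (m : ℕ) :
    Efun p s m = (p:ℝ) ^ m * (cst p s * (1 - qv p s ^ m)) := by
  induction m with
  | zero => simp [Efun]
  | succ m IH =>
    have hPne : (p:ℝ) ≠ 0 := by
      have := one_lt_P (p := p); linarith
    have hPκ : (p:ℝ) - kap p s ≠ 0 := (P_sub_kap_pos hs).ne'
    have hc : cst p s * ((p:ℝ) - kap p s) = (p:ℝ) - 1 := div_mul_cancel₀ _ hPκ
    have hq : qv p s * (p:ℝ) = kap p s := div_mul_cancel₀ _ hPne
    rw [Efun, IH]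
    linear_combination (-((p:ℝ)^m)) * hc + ((p:ℝ)^m * cst p s * qv p s ^ m) * hq
end Part2

/-- the multi-dimensional finite sum -/
noncomputable def Pm (p : ℕ) [Fact p.Prime] (s : ℝ) (N m : ℕ) (a : ℚ_[p])
    (z : Fin N → ℚ_[p]) : ℝ :=
  ∑ η : Fin N → Fin (p ^ m), ‖a + ∑ i, ((η i : ℕ) : ℚ_[p]) * z i‖ ^ s

lemma Pm_eq_of_lt {s : ℝ} {N m : ℕ} {a : ℚ_[p]} {z : Fin N → ℚ_[p]} {R : ℝ}
    (hR : 0 ≤ R) (hz : ∀ i, ‖z i‖ ≤ R) (haR : R < ‖a‖) :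
    Pm p s N m a z = ((p:ℝ)^m)^N * ‖a‖^s := by
  have hterm : ∀ η : Fin N → Fin (p ^ m),
      ‖a + ∑ i, ((η i : ℕ) : ℚ_[p]) * z i‖ ^ s = ‖a‖ ^ s := by
    intro η
    have hsum : ‖∑ i, ((η i : ℕ) : ℚ_[p]) * z i‖ ≤ R := by
      refine norm_sum_le_of_le _ _ hR fun i _ => ?_
      rw [norm_mul]
      calc ‖((η i : ℕ) : ℚ_[p])‖ * ‖z i‖ ≤ 1 * R :=
        mul_le_mul (norm_natCast_le_one _) (hz i) (norm_nonneg _) zero_le_one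
      _ = R := one_mul R
    rw [norm_add_eq_left (lt_of_le_of_lt hsum haR)]
  rw [Pm, Finset.sum_congr rfl (fun η _ => hterm η), Finset.sum_const, nsmul_eq_mul]
  congr 1
  simp only [Finset.card_univ, Fintype.card_fun, Fintype.card_fin]
  push_cast
  ring

lemma Pm_bounds {s : ℝ} (hs : 0 < s) {N m : ℕ} {a : ℚ_[p]} {z : Fin N → ℚ_[p]} (i0 : Fin N)
    (hmax : ∀ i, ‖z i‖ ≤ ‖z i0‖) (ha : ‖a‖ ≤ ‖z i0‖) (hz0 : z i0 ≠ 0) :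
    ((p:ℝ)^m)^(N-1) * (‖z i0‖^s * Efun p s m) ≤ Pm p s N m a z ∧
    Pm p s N m a z ≤ ((p:ℝ)^m)^(N-1) * (‖z i0‖^s * (Efun p s m + kap p s ^ m)) := by
  classical
  have hppos : 0 < p := hp.out.pos
  have hMpos : 0 < p ^ m := Nat.pow_pos hppos
  set M := p ^ m with hMdef
  set r := ‖z i0‖ with hrdef
  have hr0 : 0 < r := norm_pos_iff.2 hz0
  set e := Equiv.funSplitAt i0 (Fin M) with hedef
  have happ : ∀ (j : Fin M) (g : {k // k ≠ i0} → Fin M) (i : Fin N) (h : i ≠ i0),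
      e.symm (j, g) i = g ⟨i, h⟩ := by
    intro j g i h
    simp [hedef, Equiv.funSplitAt, Equiv.piSplitAt, dif_neg h]
  have happ0 : ∀ (j : Fin M) (g : {k // k ≠ i0} → Fin M), e.symm (j, g) i0 = j := by
    intro j g
    simp [hedef, Equiv.funSplitAt, Equiv.piSplitAt]
  set j0 : Fin M := ⟨0, hMpos⟩ with hj0def
  set B : ({k // k ≠ i0} → Fin M) → ℚ_[p] :=
    fun g => a + ∑ i ∈ Finset.univ.erase i0, ((e.symm (j0, g) i : ℕ) : ℚ_[p]) * z i with hBdef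
  have hkey : ∀ (j : Fin M) (g : {k // k ≠ i0} → Fin M),
      a + ∑ i, ((e.symm (j, g) i : ℕ) : ℚ_[p]) * z i = B g + ((j : ℕ) : ℚ_[p]) * z i0 := by
    intro j g
    rw [← Finset.add_sum_erase _ _ (Finset.mem_univ i0), happ0]
    have : ∑ i ∈ Finset.univ.erase i0, ((e.symm (j, g) i : ℕ) : ℚ_[p]) * z i
        = ∑ i ∈ Finset.univ.erase i0, ((e.symm (j0, g) i : ℕ) : ℚ_[p]) * z i := by
      refine Finset.sum_congr rfl fun i hi => ?_
      have hine := (Finset.mem_erase.1 hi).1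
      rw [happ j g i hine, happ j0 g i hine]
    rw [this, hBdef]
    ring
  have hBle : ∀ g, ‖B g‖ ≤ r := by
    intro g
    rw [hBdef]
    refine le_trans (IsUltrametricDist.norm_add_le_max _ _) (max_le ha ?_)
    refine norm_sum_le_of_le _ _ hr0.le fun i _ => ?_
    rw [norm_mul]
    calc ‖((e.symm (j0, g) i : ℕ) : ℚ_[p])‖ * ‖z i‖ ≤ 1 * r :=
      mul_le_mul (norm_natCast_le_one _) (hmax i) (norm_nonneg _) zero_le_one
    _ = r := one_mul r
  set u : ({k // k ≠ i0} → Fin M) → ℚ_[p] := fun g => B g / z i0 with hudef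
  have hu1 : ∀ g, ‖u g‖ ≤ 1 := by
    intro g
    rw [hudef]
    simp only [norm_div]
    rw [div_le_one hr0]
    exact hBle g
  have hterm : ∀ (j : Fin M) (g : {k // k ≠ i0} → Fin M),
      ‖a + ∑ i, ((e.symm (j, g) i : ℕ) : ℚ_[p]) * z i‖ ^ s
        = r ^ s * ‖u g + ((j:ℕ) : ℚ_[p])‖ ^ s := by
    intro j g
    rw [hkey]
    have : B g + ((j : ℕ) : ℚ_[p]) * z i0 = z i0 * (u g + ((j:ℕ) : ℚ_[p])) := by
      have h1 : z i0 * u g = B g := mul_div_cancel₀ _ hz0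
      linear_combination -h1
    rw [this, norm_mul, ← hrdef, Real.mul_rpow hr0.le (norm_nonneg _)]
  -- reindex the big sum
  have hsum : Pm p s N m a z
      = ∑ g : {k // k ≠ i0} → Fin M, ∑ j : Fin M,
          ‖a + ∑ i, ((e.symm (j, g) i : ℕ) : ℚ_[p]) * z i‖ ^ s := by
    rw [Pm, ← Equiv.sum_comp e.symm (fun η => ‖a + ∑ i, ((η i : ℕ) : ℚ_[p]) * z i‖ ^ s)]
    rw [Fintype.sum_prod_type]
    exact Finset.sum_comm
  have hinner : ∀ g, (∑ j : Fin M, ‖a + ∑ i, ((e.symm (j, g) i : ℕ) : ℚ_[p]) * z i‖ ^ s)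
      = r ^ s * ∑ j ∈ Finset.range M, ‖u g + (j : ℚ_[p])‖ ^ s := by
    intro g
    rw [Finset.mul_sum]
    rw [← Fin.sum_univ_eq_sum_range (fun j => r ^ s * ‖u g + (j : ℚ_[p])‖ ^ s) M]
    exact Finset.sum_congr rfl fun j _ => hterm j g
  have hcard : (Finset.univ : Finset ({k // k ≠ i0} → Fin M)).card = M ^ (N - 1) := by
    rw [Finset.card_univ, Fintype.card_fun, Fintype.card_fin]
    congr 1
    rw [Fintype.card_subtype_compl, Fintype.card_subtype_eq, Fintype.card_fin]
  have hcast : ((M : ℕ) : ℝ) ^ (N - 1) = ((p:ℝ)^m)^(N-1) := by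
    rw [hMdef]; push_cast; ring
  have hrs : 0 < r ^ s := Real.rpow_pos_of_pos hr0 s
  constructor
  · rw [hsum]
    calc ((p:ℝ)^m)^(N-1) * (r^s * Efun p s m)
        = ∑ _g : {k // k ≠ i0} → Fin M, r ^ s * Efun p s m := by
          rw [Finset.sum_const, hcard, nsmul_eq_mul]
          push_cast [hcast]
          ring
      _ ≤ _ := by
          refine Finset.sum_le_sum fun g _ => ?_
          rw [hinner g]
          exact mul_le_mul_of_nonneg_left ((oneD hs m (u g) (hu1 g)).1) hrs.le
  · rw [hsum]
    calc ∑ g : {k // k ≠ i0} → Fin M, (∑ j : Fin M,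
          ‖a + ∑ i, ((e.symm (j, g) i : ℕ) : ℚ_[p]) * z i‖ ^ s)
        ≤ ∑ _g : {k // k ≠ i0} → Fin M, r ^ s * (Efun p s m + kap p s ^ m) := by
          refine Finset.sum_le_sum fun g _ => ?_
          rw [hinner g]
          exact mul_le_mul_of_nonneg_left ((oneD hs m (u g) (hu1 g)).2) hrs.le
      _ = ((p:ℝ)^m)^(N-1) * (r^s * (Efun p s m + kap p s ^ m)) := by
          rw [Finset.sum_const, hcard, nsmul_eq_mul]
          push_cast [hcast]
          ring





section Meas

variable {N : ℕ}

/-- continuity of finite suprema of continuous real functions -/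
lemma continuous_fin_ciSup [Nonempty (Fin N)] {X : Type*} [TopologicalSpace X]
    (f : Fin N → X → ℝ) (hf : ∀ i, Continuous (f i)) :
    Continuous fun x => ⨆ i, f i x := by
  have key : ∀ x, (⨆ i, f i x)
      = Finset.univ.sup' (Finset.univ_nonempty (α := Fin N)) (fun i => f i x) := by
    intro x
    refine le_antisymm (ciSup_le fun i => Finset.le_sup' (fun j => f j x) (Finset.mem_univ i)) ?_
    exact Finset.sup'_le _ _ fun i _ => le_ciSup (f := fun j => f j x) (Finite.bddAbove_range _) i
  simp only [key]
  clear key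
  generalize (Finset.univ_nonempty (α := Fin N)) = hne
  generalize (Finset.univ : Finset (Fin N)) = t at hne ⊢
  induction hne using Finset.Nonempty.cons_induction with
  | singleton i => simpa using hf i
  | cons i t hit hne IH =>
    have heq : (fun x => (Finset.cons i t hit).sup' (Finset.cons_nonempty hit) (fun j => f j x))
        = fun x => (f i x) ⊔ (t.sup' hne (fun j => f j x)) := by
      funext x; exact Finset.sup'_cons hne (fun j => f j x)
    rw [heq]
    exact (hf i).sup IH

/-- the weight M(y) -/
noncomputable def Mw (y : Fin N → ℚ_[p]) : ℝ := max 1 (⨆ i, ‖y i‖)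

lemma Mw_ge_one (y : Fin N → ℚ_[p]) : 1 ≤ Mw y := le_max_left _ _
lemma Mw_pos (y : Fin N → ℚ_[p]) : 0 < Mw y := lt_of_lt_of_le one_pos (Mw_ge_one y)
lemma le_Mw [Nonempty (Fin N)] (y : Fin N → ℚ_[p]) (i : Fin N) : ‖y i‖ ≤ Mw y :=
  le_trans (le_ciSup (f := fun j => ‖y j‖) (Finite.bddAbove_range _) i) (le_max_right _ _)

lemma continuous_Mw [Nonempty (Fin N)] : Continuous (Mw (p := p) (N := N)) :=
  continuous_const.max (continuous_fin_ciSup _ (fun i => (continuous_apply i).norm))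

lemma measurable_ofReal_rpow {s : ℝ} (hs : 0 < s) {f : (Fin N → ℚ_[p]) → ℝ}
    (hf : Continuous f) : Measurable fun y => ENNReal.ofReal (f y ^ s) :=
  ENNReal.measurable_ofReal.comp ((Real.continuous_rpow_const hs.le).comp hf).measurable

lemma continuous_ker (a : ℚ_[p]) (η : Fin N → ℚ_[p]) (c : Fin N → ℚ_[p]) :
    Continuous fun y : Fin N → ℚ_[p] => a + ∑ i, η i * (y i - c i) :=
  continuous_const.add (continuous_finset_sum _ fun i _ =>
    continuous_const.mul ((continuous_apply i).sub continuous_const))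

end Meas

section Kf

variable {N : ℕ} {s : ℝ}

/-- the transformed kernel integral -/
noncomputable def Kf (s : ℝ) (μ : Measure (Fin N → ℚ_[p])) (a : ℚ_[p])
    (η : Fin N → ℚ_[p]) : ℝ≥0∞ :=
  ∫⁻ y, ENNReal.ofReal (‖a + ∑ i, η i * y i‖ ^ s) ∂μ

lemma Kf_scale (hs : 0 < s) (μ : Measure (Fin N → ℚ_[p])) {a : ℚ_[p]} (ha : a ≠ 0)
    (η : Fin N → ℚ_[p]) :
    Kf s μ a η = ENNReal.ofReal (‖a‖ ^ s) * Kf s μ 1 (fun i => a⁻¹ * η i) := by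
  rw [Kf, Kf, ← lintegral_const_mul' _ _ ENNReal.ofReal_ne_top]
  refine lintegral_congr fun y => ?_
  rw [← ENNReal.ofReal_mul (by positivity)]
  congr 1
  rw [← Real.mul_rpow (norm_nonneg _) (norm_nonneg _), ← norm_mul]
  congr 2
  rw [mul_add, mul_one, Finset.mul_sum]
  congr 1
  refine Finset.sum_congr rfl fun i _ => ?_
  field_simp

lemma Kf_zero_tendsto (hs : 0 < s) (μ : Measure (Fin N → ℚ_[p])) [IsFiniteMeasure μ]
    [Nonempty (Fin N)]
    (hmom : ∫⁻ y, ENNReal.ofReal ((Mw y) ^ s) ∂μ ≠ ⊤) (η : Fin N → ℚ_[p]) :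
    Tendsto (fun n : ℕ => Kf s μ ((p:ℚ_[p])^n) η) atTop (𝓝 (Kf s μ 0 η)) := by
  set Cη : ℝ := max 1 (⨆ i, ‖η i‖) with hCη
  have hCη1 : 1 ≤ Cη := le_max_left _ _
  have hCη0 : 0 < Cη := lt_of_lt_of_le one_pos hCη1
  have hηle : ∀ i, ‖η i‖ ≤ Cη := fun i =>
    le_trans (le_ciSup (f := fun j => ‖η j‖) (Finite.bddAbove_range _) i) (le_max_right _ _)
  have hnormpn : ∀ n : ℕ, ‖((p:ℚ_[p])^n)‖ = ((p:ℝ)⁻¹)^n := by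
    intro n; rw [norm_pow, Padic.norm_p]
  have hsumle : ∀ y : Fin N → ℚ_[p], ‖∑ i, η i * y i‖ ≤ Cη * Mw y := by
    intro y
    refine norm_sum_le_of_le _ _ (mul_pos hCη0 (Mw_pos y)).le fun i _ => ?_
    rw [norm_mul]
    exact mul_le_mul (hηle i) (le_Mw y i) (norm_nonneg _) hCη0.le
  refine tendsto_lintegral_of_dominated_convergence
    (fun y => ENNReal.ofReal (Cη ^ s * Mw y ^ s)) (fun n => ?_) (fun n => ?_) ?_ ?_
  · have hcont : Continuous fun y : Fin N → ℚ_[p] => (p:ℚ_[p])^n + ∑ i, η i * y i := by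
      fun_prop
    exact measurable_ofReal_rpow hs hcont.norm
  · refine Filter.Eventually.of_forall fun y => ?_
    refine ENNReal.ofReal_le_ofReal ?_
    rw [← Real.mul_rpow hCη0.le (Mw_pos y).le]
    refine Real.rpow_le_rpow (norm_nonneg _) ?_ hs.le
    refine le_trans (IsUltrametricDist.norm_add_le_max _ _) (max_le ?_ (hsumle y))
    rw [hnormpn]
    calc ((p:ℝ)⁻¹)^n ≤ 1 := pow_le_one₀ Pinv_pos.le Pinv_lt_one.le
      _ ≤ Cη * Mw y := one_le_mul_of_one_le_of_one_le hCη1 (Mw_ge_one y)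
  · have : ∀ y : Fin N → ℚ_[p], ENNReal.ofReal (Cη ^ s * Mw y ^ s)
        = ENNReal.ofReal (Cη ^ s) * ENNReal.ofReal (Mw y ^ s) := fun y =>
      ENNReal.ofReal_mul (by positivity)
    simp only [this]
    rw [lintegral_const_mul' _ _ ENNReal.ofReal_ne_top]
    exact ENNReal.mul_ne_top ENNReal.ofReal_ne_top hmom
  · refine Filter.Eventually.of_forall fun y => ?_
    by_cases hzy : (∑ i, η i * y i) = 0
    · have hval : ∀ n : ℕ, ENNReal.ofReal (‖(p:ℚ_[p])^n + ∑ i, η i * y i‖ ^ s)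
          = ENNReal.ofReal ((kap p s) ^ n) := by
        intro n
        rw [hzy, add_zero, hnormpn]
        congr 1
        rw [← Real.rpow_natCast ((p:ℝ)⁻¹) n, ← Real.rpow_natCast (kap p s) n, kap,
          ← Real.rpow_mul Pinv_pos.le, ← Real.rpow_mul Pinv_pos.le, mul_comm]
      have h0 : ENNReal.ofReal (‖(0:ℚ_[p]) + ∑ i, η i * y i‖ ^ s) = 0 := by
        rw [zero_add, hzy, norm_zero, Real.zero_rpow hs.ne', ENNReal.ofReal_zero]
      have hlim0 : Tendsto (fun n : ℕ => ENNReal.ofReal ((kap p s)^n)) atTop (𝓝 0) := by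
        simpa using ENNReal.tendsto_ofReal
          (tendsto_pow_atTop_nhds_zero_of_lt_one (kap_pos (p := p) s).le (kap_lt_one hs))
      rw [h0]
      exact hlim0.congr fun n => (hval n).symm
    · have hpos : 0 < ‖∑ i, η i * y i‖ := norm_pos_iff.2 hzy
      obtain ⟨n0, hn0⟩ := exists_pow_lt_of_lt_one hpos (Pinv_lt_one (p := p))
      have hev : ∀ n ≥ n0, ENNReal.ofReal (‖(p:ℚ_[p])^n + ∑ i, η i * y i‖ ^ s)
          = ENNReal.ofReal (‖(0:ℚ_[p]) + ∑ i, η i * y i‖ ^ s) := by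
        intro n hn
        have hlt : ‖(p:ℚ_[p])^n‖ < ‖∑ i, η i * y i‖ := by
          rw [hnormpn]
          calc ((p:ℝ)⁻¹)^n ≤ ((p:ℝ)⁻¹)^n0 :=
              pow_le_pow_of_le_one Pinv_pos.le Pinv_lt_one.le hn
            _ < ‖∑ i, η i * y i‖ := hn0
        rw [zero_add, add_comm, norm_add_eq_left hlt]
      refine Tendsto.congr' ?_ tendsto_const_nhds
      filter_upwards [eventually_ge_atTop n0] with n hn
      exact (hev n hn).symm

lemma Kf_eq_of_base (hs : 0 < s) (μ μ' : Measure (Fin N → ℚ_[p]))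
    [IsFiniteMeasure μ] [IsFiniteMeasure μ'] [Nonempty (Fin N)]
    (hmom : ∫⁻ y, ENNReal.ofReal ((Mw y) ^ s) ∂μ ≠ ⊤)
    (hmom' : ∫⁻ y, ENNReal.ofReal ((Mw y) ^ s) ∂μ' ≠ ⊤)
    (hbase : ∀ lam : Fin N → ℚ_[p], Kf s μ 1 lam = Kf s μ' 1 lam) :
    ∀ (a : ℚ_[p]) (η : Fin N → ℚ_[p]), Kf s μ a η = Kf s μ' a η := by
  have hne : ∀ (a : ℚ_[p]), a ≠ 0 → ∀ η, Kf s μ a η = Kf s μ' a η := by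
    intro a ha η
    rw [Kf_scale hs μ ha, Kf_scale hs μ' ha, hbase]
  intro a η
  rcases eq_or_ne a 0 with rfl | ha
  · have hpn : ∀ n : ℕ, ((p:ℚ_[p])^n) ≠ 0 :=
      fun n => pow_ne_zero _ (Nat.cast_ne_zero.2 hp.out.ne_zero)
    refine tendsto_nhds_unique (Kf_zero_tendsto hs μ hmom η) ?_
    have := Kf_zero_tendsto hs μ' hmom' η
    refine Tendsto.congr (fun n => (hne _ (hpn n) η).symm) this
  · exact hne a ha η

end Kf


section Main

variable {N : ℕ} {s : ℝ}

/-- open-ball set -/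
def Slt (c : Fin N → ℚ_[p]) (t : ℝ) : Set (Fin N → ℚ_[p]) := {y | ∀ i, ‖y i - c i‖ < t}

/-- radius function -/
noncomputable def rc (c : Fin N → ℚ_[p]) (y : Fin N → ℚ_[p]) : ℝ := ⨆ i, ‖y i - c i‖

open Classical in
/-- the limit integrand -/
noncomputable def glim (s : ℝ) (c : Fin N → ℚ_[p]) (t : ℝ) (y : Fin N → ℚ_[p]) : ℝ≥0∞ :=
  if y ∈ Slt c t then ENNReal.ofReal (t ^ s) else ENNReal.ofReal (cst p s * (rc c y) ^ s)

variable [Nonempty (Fin N)]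

lemma rc_exists_max (c y : Fin N → ℚ_[p]) :
    ∃ i0, rc c y = ‖y i0 - c i0‖ ∧ ∀ i, ‖y i - c i‖ ≤ ‖y i0 - c i0‖ := by
  obtain ⟨i0, hi0⟩ := Finite.exists_max (fun i => ‖y i - c i‖)
  exact ⟨i0, le_antisymm (ciSup_le hi0)
    (le_ciSup (f := fun i => ‖y i - c i‖) (Finite.bddAbove_range _) i0), hi0⟩

lemma rc_nonneg (c y : Fin N → ℚ_[p]) : 0 ≤ rc c y := by
  obtain ⟨i0, h1, _⟩ := rc_exists_max c y; rw [h1]; exact norm_nonneg _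

lemma le_rc (c y : Fin N → ℚ_[p]) (i : Fin N) : ‖y i - c i‖ ≤ rc c y := by
  obtain ⟨i0, h1, h2⟩ := rc_exists_max c y; rw [h1]; exact h2 i

lemma mem_Slt_iff_rc_lt (c : Fin N → ℚ_[p]) (t : ℝ) (y : Fin N → ℚ_[p]) :
    y ∈ Slt c t ↔ rc c y < t := by
  obtain ⟨i0, h1, h2⟩ := rc_exists_max c y
  constructor
  · intro h; rw [h1]; exact h i0
  · intro h i; exact lt_of_le_of_lt (le_rc c y i) h

lemma measurableSet_Slt (c : Fin N → ℚ_[p]) (t : ℝ) :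
    MeasurableSet (Slt (p := p) (N := N) c t) := by
  have hset : Slt c t = ⋂ i, {y : Fin N → ℚ_[p] | ‖y i - c i‖ < t} := by
    ext y; simp [Slt, Set.mem_iInter]
  rw [hset]
  refine MeasurableSet.iInter fun i => ?_
  have hcont : Continuous fun y : Fin N → ℚ_[p] => ‖y i - c i‖ :=
    ((continuous_apply i).sub continuous_const).norm
  exact measurableSet_lt hcont.measurable measurable_const

lemma rc_le_Mw (c y : Fin N → ℚ_[p]) : rc c y ≤ (max 1 (⨆ i, ‖c i‖)) * Mw y := by
  set Cc := max 1 (⨆ i, ‖c i‖) with hCcdef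
  have hCc1 : 1 ≤ Cc := le_max_left _ _
  have hCc0 : 0 < Cc := lt_of_lt_of_le one_pos hCc1
  refine ciSup_le fun i => ?_
  have h1 : ‖y i - c i‖ ≤ max ‖y i‖ ‖c i‖ := by
    rw [sub_eq_add_neg]
    refine le_trans (IsUltrametricDist.norm_add_le_max _ _) ?_
    rw [norm_neg]
  refine le_trans h1 (max_le ?_ ?_)
  · calc ‖y i‖ ≤ Mw y := le_Mw y i
      _ = 1 * Mw y := (one_mul _).symm
      _ ≤ Cc * Mw y := mul_le_mul_of_nonneg_right hCc1 (Mw_pos y).le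
  · calc ‖c i‖ ≤ Cc :=
        le_trans (le_ciSup (f := fun j => ‖c j‖) (Finite.bddAbove_range _) i) (le_max_right _ _)
      _ = Cc * 1 := (mul_one _).symm
      _ ≤ Cc * Mw y := mul_le_mul_of_nonneg_left (Mw_ge_one y) hCc0.le

lemma lint_rc_ne_top (hs : 0 < s) (μ : Measure (Fin N → ℚ_[p]))
    (hmom : ∫⁻ y, ENNReal.ofReal ((Mw y) ^ s) ∂μ ≠ ⊤) (c : Fin N → ℚ_[p]) {co : ℝ}
    (hco : 0 ≤ co) :
    ∫⁻ y, ENNReal.ofReal (co * (rc c y) ^ s) ∂μ ≠ ⊤ := by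
  set Cc := max 1 (⨆ i, ‖c i‖) with hCcdef
  have hCc0 : (0:ℝ) < Cc := lt_of_lt_of_le one_pos (le_max_left _ _)
  have hb : ∀ y, ENNReal.ofReal (co * (rc c y) ^ s)
      ≤ ENNReal.ofReal (co * Cc ^ s) * ENNReal.ofReal ((Mw y) ^ s) := by
    intro y
    rw [← ENNReal.ofReal_mul (by positivity)]
    refine ENNReal.ofReal_le_ofReal ?_
    have h1 : (rc c y) ^ s ≤ (Cc * Mw y) ^ s :=
      Real.rpow_le_rpow (rc_nonneg c y) (rc_le_Mw c y) hs.le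
    rw [Real.mul_rpow hCc0.le (Mw_pos y).le] at h1
    calc co * rc c y ^ s ≤ co * (Cc ^ s * Mw y ^ s) := by
          refine mul_le_mul_of_nonneg_left h1 hco
      _ = co * Cc ^ s * Mw y ^ s := by ring
  refine ne_of_lt (lt_of_le_of_lt (lintegral_mono hb) ?_)
  rw [lintegral_const_mul' _ _ ENNReal.ofReal_ne_top]
  exact ENNReal.mul_lt_top ENNReal.ofReal_lt_top (lt_top_iff_ne_top.2 hmom)

lemma sum_K_eq (hs : 0 < s) (μ : Measure (Fin N → ℚ_[p])) (c : Fin N → ℚ_[p])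
    (m : ℕ) (a : ℚ_[p]) :
    (∑ η : Fin N → Fin (p ^ m), Kf s μ (a - ∑ i, ((η i : ℕ) : ℚ_[p]) * c i)
      (fun i => ((η i : ℕ) : ℚ_[p])))
    = ∫⁻ y, ENNReal.ofReal (Pm p s N m a (fun i => y i - c i)) ∂μ := by
  simp only [Kf]
  rw [← lintegral_finset_sum]
  · refine lintegral_congr fun y => ?_
    rw [Pm, ENNReal.ofReal_sum_of_nonneg (fun η _ => by positivity)]
    refine Finset.sum_congr rfl fun η _ => ?_
    congr 2
    have hterm : ∀ i ∈ Finset.univ, ((η i : ℕ):ℚ_[p]) * (y i - c i)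
        = ((η i : ℕ):ℚ_[p]) * y i - ((η i : ℕ):ℚ_[p]) * c i := fun i _ => mul_sub _ _ _
    rw [Finset.sum_congr rfl hterm, Finset.sum_sub_distrib]
    ring
  · intro η _
    have hcont : Continuous fun y : Fin N → ℚ_[p] =>
        (a - ∑ i, ((η i : ℕ):ℚ_[p]) * c i) + ∑ i, ((η i : ℕ):ℚ_[p]) * y i := by
      fun_prop
    exact measurable_ofReal_rpow hs hcont.norm

lemma tendsto_main (hs : 0 < s) (hN : 1 ≤ N) (μ : Measure (Fin N → ℚ_[p]))
    [IsFiniteMeasure μ]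
    (hmom : ∫⁻ y, ENNReal.ofReal ((Mw y) ^ s) ∂μ ≠ ⊤) (c : Fin N → ℚ_[p])
    {a : ℚ_[p]} (ha : a ≠ 0) :
    Tendsto (fun m : ℕ => (((p:ℝ≥0∞)^m)^N)⁻¹ *
        ∫⁻ y, ENNReal.ofReal (Pm p s N m a (fun i => y i - c i)) ∂μ)
      atTop (𝓝 (∫⁻ y, glim s c ‖a‖ y ∂μ)) := by
  classical
  have hPne : (p:ℝ) ≠ 0 := by
    have := one_lt_P (p := p); linarith
  have hpE0 : ((p:ℝ≥0∞)) ≠ 0 := by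
    exact_mod_cast Nat.cast_ne_zero.2 hp.out.ne_zero
  have hpmE0 : ∀ m : ℕ, ((p:ℝ≥0∞)^m) ≠ 0 := fun m => pow_ne_zero _ hpE0
  have hpmET : ∀ m : ℕ, ((p:ℝ≥0∞)^m) ≠ ⊤ := fun m =>
    ENNReal.pow_ne_top (ENNReal.natCast_ne_top p)
  have hcinvT : ∀ m : ℕ, (((p:ℝ≥0∞)^m)^N)⁻¹ ≠ ⊤ := fun m =>
    ENNReal.inv_ne_top.2 (pow_ne_zero _ (hpmE0 m))
  have hofPk : ∀ (m k : ℕ), ENNReal.ofReal (((p:ℝ)^m)^k) = ((p:ℝ≥0∞)^m)^k := by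
    intro m k
    rw [ENNReal.ofReal_pow (by positivity), ENNReal.ofReal_pow (by positivity),
      ENNReal.ofReal_natCast]
  have h1q : ∀ m : ℕ, 0 ≤ 1 - qv p s ^ m := fun m => by
    have := pow_le_one₀ (qv_pos (p := p) hs).le (qv_lt_one (p := p) hs).le (n := m)
    linarith
  have hcstpos := cst_pos (p := p) hs
  set F : ℕ → (Fin N → ℚ_[p]) → ℝ≥0∞ := fun m y =>
    (((p:ℝ≥0∞)^m)^N)⁻¹ * ENNReal.ofReal (Pm p s N m a (fun i => y i - c i)) with hFdef
  have hrw : ∀ m : ℕ, (((p:ℝ≥0∞)^m)^N)⁻¹ *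
      ∫⁻ y, ENNReal.ofReal (Pm p s N m a (fun i => y i - c i)) ∂μ
      = ∫⁻ y, F m y ∂μ := fun m => (lintegral_const_mul' _ _ (hcinvT m)).symm
  simp only [hrw]
  have hkey : ∀ (m : ℕ) (X : ℝ), 0 ≤ X →
      (((p:ℝ≥0∞)^m)^N)⁻¹ * ENNReal.ofReal (((p:ℝ)^m)^(N-1) * ((p:ℝ)^m * X))
        = ENNReal.ofReal X := by
    intro m X hX
    have hNsub : N - 1 + 1 = N := Nat.succ_pred_eq_of_pos hN
    rw [ENNReal.ofReal_mul (by positivity), ENNReal.ofReal_mul (by positivity), hofPk,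
      ENNReal.ofReal_pow (by positivity), ENNReal.ofReal_natCast]
    calc (((p:ℝ≥0∞)^m)^N)⁻¹ * (((p:ℝ≥0∞)^m)^(N-1) * ((p:ℝ≥0∞)^m * ENNReal.ofReal X))
        = (((p:ℝ≥0∞)^m)^N)⁻¹ * ((((p:ℝ≥0∞)^m)^(N-1) * ((p:ℝ≥0∞)^m)) * ENNReal.ofReal X) := by
          rw [mul_assoc]
      _ = (((p:ℝ≥0∞)^m)^N)⁻¹ * (((p:ℝ≥0∞)^m)^N * ENNReal.ofReal X) := by
          rw [← pow_succ, hNsub]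
      _ = ENNReal.ofReal X := by
          rw [← mul_assoc, ENNReal.inv_mul_cancel (pow_ne_zero _ (hpmE0 m))
            (ENNReal.pow_ne_top (hpmET m)), one_mul]
  have hstruct : ∀ y : Fin N → ℚ_[p],
      (y ∈ Slt c ‖a‖ ∧ ∀ m, F m y = ENNReal.ofReal (‖a‖ ^ s)) ∨
      (y ∉ Slt c ‖a‖ ∧ ∀ m,
        ENNReal.ofReal ((cst p s * (1 - qv p s ^ m)) * (rc c y) ^ s) ≤ F m y ∧
        F m y ≤ ENNReal.ofReal ((cst p s * (1 - qv p s ^ m) + qv p s ^ m) * (rc c y) ^ s)) := by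
    intro y
    obtain ⟨i0, hrceq, hmaxi⟩ := rc_exists_max c y
    by_cases hcase : y ∈ Slt c ‖a‖
    · left
      refine ⟨hcase, fun m => ?_⟩
      have hP := Pm_eq_of_lt (s := s) (m := m) (rc_nonneg c y) (le_rc c y)
        ((mem_Slt_iff_rc_lt c ‖a‖ y).1 hcase)
      rw [hFdef]
      simp only
      rw [hP, ENNReal.ofReal_mul (by positivity), hofPk, ← mul_assoc,
        ENNReal.inv_mul_cancel (pow_ne_zero _ (hpmE0 m)) (ENNReal.pow_ne_top (hpmET m)),
        one_mul]
    · right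
      refine ⟨hcase, fun m => ?_⟩
      have hrge : ‖a‖ ≤ rc c y := by
        rw [mem_Slt_iff_rc_lt] at hcase; exact le_of_not_gt hcase
      have hrpos : 0 < rc c y := lt_of_lt_of_le (norm_pos_iff.2 ha) hrge
      have hz0 : y i0 - c i0 ≠ 0 := by
        intro h0
        rw [hrceq, h0, norm_zero] at hrpos
        exact lt_irrefl _ hrpos
      have hb := Pm_bounds (s := s) hs (m := m) (a := a) (z := fun i => y i - c i) i0
        hmaxi (by rw [← hrceq]; exact hrge) hz0
      have hrw1 : ‖y i0 - c i0‖ ^ s * Efun p s m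
          = (p:ℝ)^m * ((cst p s * (1 - qv p s ^ m)) * (rc c y) ^ s) := by
        rw [Efun_closed hs m, hrceq]; ring
      have hkapqv : kap p s = qv p s * (p:ℝ) := (div_mul_cancel₀ _ hPne).symm
      have hrw2 : ‖y i0 - c i0‖ ^ s * (Efun p s m + kap p s ^ m)
          = (p:ℝ)^m * ((cst p s * (1 - qv p s ^ m) + qv p s ^ m) * (rc c y) ^ s) := by
        rw [Efun_closed hs m, hkapqv, mul_pow, hrceq]; ring
      have hrcs : 0 ≤ (rc c y) ^ s := Real.rpow_pos_of_pos hrpos s |>.le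
      constructor
      · calc ENNReal.ofReal ((cst p s * (1 - qv p s ^ m)) * (rc c y) ^ s)
            = (((p:ℝ≥0∞)^m)^N)⁻¹ * ENNReal.ofReal (((p:ℝ)^m)^(N-1)
                * ((p:ℝ)^m * ((cst p s * (1 - qv p s ^ m)) * (rc c y) ^ s))) := by
              rw [hkey m _ (mul_nonneg (mul_nonneg hcstpos.le (h1q m)) hrcs)]
          _ ≤ F m y := by
              rw [hFdef]; simp only
              refine mul_le_mul_right (ENNReal.ofReal_le_ofReal ?_) _
              calc ((p:ℝ)^m)^(N-1) * ((p:ℝ)^m * ((cst p s * (1 - qv p s ^ m)) * (rc c y) ^ s))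
                  = ((p:ℝ)^m)^(N-1) * (‖y i0 - c i0‖ ^ s * Efun p s m) := by rw [hrw1]
                _ ≤ Pm p s N m a (fun i => y i - c i) := hb.1
      · calc F m y
            ≤ (((p:ℝ≥0∞)^m)^N)⁻¹ * ENNReal.ofReal (((p:ℝ)^m)^(N-1)
                * ((p:ℝ)^m * ((cst p s * (1 - qv p s ^ m) + qv p s ^ m) * (rc c y) ^ s))) := by
              rw [hFdef]; simp only
              refine mul_le_mul_right (ENNReal.ofReal_le_ofReal ?_) _
              calc Pm p s N m a (fun i => y i - c i)
                  ≤ ((p:ℝ)^m)^(N-1) * (‖y i0 - c i0‖ ^ s * (Efun p s m + kap p s ^ m)) := hb.2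
                _ = ((p:ℝ)^m)^(N-1) * ((p:ℝ)^m
                    * ((cst p s * (1 - qv p s ^ m) + qv p s ^ m) * (rc c y) ^ s)) := by
                    rw [hrw2]
          _ = ENNReal.ofReal ((cst p s * (1 - qv p s ^ m) + qv p s ^ m) * (rc c y) ^ s) := by
              rw [hkey m _ (mul_nonneg (add_nonneg (mul_nonneg hcstpos.le (h1q m))
                (pow_nonneg (qv_pos (p := p) hs).le m)) hrcs)]
  refine tendsto_lintegral_of_dominated_convergence
    (fun y => ENNReal.ofReal (‖a‖ ^ s) + ENNReal.ofReal ((cst p s + 1) * (rc c y) ^ s))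
    (fun m => ?_) (fun m => ?_) ?_ ?_
  · refine Measurable.const_mul ?_ _
    have hcont : Continuous fun y : Fin N → ℚ_[p] => Pm p s N m a (fun i => y i - c i) := by
      refine continuous_finset_sum _ fun η _ => ?_
      exact (Real.continuous_rpow_const hs.le).comp
        (continuous_ker a (fun i => ((η i : ℕ):ℚ_[p])) c).norm
    exact ENNReal.measurable_ofReal.comp hcont.measurable
  · refine Filter.Eventually.of_forall fun y => ?_
    rcases hstruct y with ⟨_, heq⟩ | ⟨_, hbound⟩
    · rw [heq m]; exact self_le_add_right _ _
    · refine le_trans (hbound m).2 (le_trans (ENNReal.ofReal_le_ofReal ?_) (self_le_add_left _ _))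
      refine mul_le_mul_of_nonneg_right ?_ (Real.rpow_nonneg (rc_nonneg c y) s)
      have h2 := pow_nonneg (qv_pos (p := p) hs).le m
      have h3 := pow_le_one₀ (qv_pos (p := p) hs).le (qv_lt_one (p := p) hs).le (n := m)
      nlinarith [hcstpos]
  · rw [lintegral_add_left measurable_const]
    refine ENNReal.add_ne_top.2 ⟨?_, ?_⟩
    · rw [lintegral_const]
      exact ENNReal.mul_ne_top ENNReal.ofReal_ne_top (measure_ne_top μ _)
    · exact lint_rc_ne_top hs μ hmom c (by linarith [hcstpos])
  · refine Filter.Eventually.of_forall fun y => ?_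
    rcases hstruct y with ⟨hmem, heq⟩ | ⟨hnmem, hbound⟩
    · have hg : glim s c ‖a‖ y = ENNReal.ofReal (‖a‖ ^ s) := if_pos hmem
      rw [hg]
      exact tendsto_const_nhds.congr fun m => (heq m).symm
    · have hg : glim s c ‖a‖ y = ENNReal.ofReal (cst p s * (rc c y) ^ s) := if_neg hnmem
      rw [hg]
      have hq0 : Tendsto (fun m : ℕ => qv p s ^ m) atTop (𝓝 0) :=
        tendsto_pow_atTop_nhds_zero_of_lt_one (qv_pos (p := p) hs).le (qv_lt_one (p := p) hs)
      have hlow : Tendsto (fun m : ℕ =>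
          ENNReal.ofReal ((cst p s * (1 - qv p s ^ m)) * (rc c y)^s)) atTop
          (𝓝 (ENNReal.ofReal (cst p s * (rc c y)^s))) := by
        refine ENNReal.tendsto_ofReal ?_
        have h := (((hq0.const_sub 1).const_mul (cst p s)).mul_const ((rc c y)^s))
        simpa using h
      have hup : Tendsto (fun m : ℕ =>
          ENNReal.ofReal ((cst p s * (1 - qv p s ^ m) + qv p s ^ m) * (rc c y)^s)) atTop
          (𝓝 (ENNReal.ofReal (cst p s * (rc c y)^s))) := by
        refine ENNReal.tendsto_ofReal ?_
        have h := ((((hq0.const_sub 1).const_mul (cst p s)).add hq0).mul_const ((rc c y)^s))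
        simpa using h
      exact tendsto_of_tendsto_of_tendsto_of_le_of_le hlow hup
        (fun m => (hbound m).1) (fun m => (hbound m).2)

lemma glim_split (μ : Measure (Fin N → ℚ_[p])) (c : Fin N → ℚ_[p]) (t : ℝ) :
    ∫⁻ y, glim s c t y ∂μ
      = ENNReal.ofReal (t ^ s) * μ (Slt c t)
        + ∫⁻ y in (Slt c t)ᶜ, ENNReal.ofReal (cst p s * (rc c y) ^ s) ∂μ := by
  rw [← lintegral_add_compl (glim s c t) (measurableSet_Slt c t)]
  congr 1
  · rw [setLIntegral_congr_fun (f := glim s c t)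
      (g := fun _ => ENNReal.ofReal (t ^ s)) (measurableSet_Slt c t)
      (fun y hy => if_pos hy), setLIntegral_const, mul_comm]
  · exact setLIntegral_congr_fun (f := glim s c t)
      (g := fun y => ENNReal.ofReal (cst p s * (rc c y) ^ s)) (measurableSet_Slt c t).compl
      (fun y hy => if_neg hy)

lemma seq_zero {γ D : ℝ} (hγ : 1 < γ) (δ : ℤ → ℝ) (hrec : ∀ j : ℤ, δ j = γ * δ (j+1))
    (hbd : ∀ j, |δ j| ≤ D) : ∀ j, δ j = 0 := by
  intro j
  by_contra hne
  have hpos : 0 < |δ j| := abs_pos.2 hne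
  have hiter : ∀ n : ℕ, δ (j - n) = γ ^ n * δ j := by
    intro n
    induction n with
    | zero => simp
    | succ n IH =>
      have harg : j - ((n:ℤ)+1) + 1 = j - n := by ring
      calc δ (j - ((n:ℕ)+1:ℕ)) = γ * δ (j - ((n:ℤ)+1) + 1) := by
            rw [hrec (j - ((n:ℕ)+1:ℕ))]; norm_num
        _ = γ * δ (j - n) := by rw [harg]
        _ = γ * (γ ^ n * δ j) := by rw [IH]
        _ = γ ^ (n+1) * δ j := by ring
  obtain ⟨n, hn⟩ := pow_unbounded_of_one_lt (D / |δ j|) hγ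
  have h1 := hbd (j - n)
  rw [hiter n, abs_mul, abs_of_pos (pow_pos (lt_trans one_pos hγ) n)] at h1
  rw [div_lt_iff₀ hpos] at hn
  linarith

end Main

section Recursion

variable {N : ℕ} {s : ℝ} [Nonempty (Fin N)]

lemma measure_Slt_eq (hs : 0 < s) (hN : 1 ≤ N) (μ μ' : Measure (Fin N → ℚ_[p]))
    [IsFiniteMeasure μ] [IsFiniteMeasure μ']
    (hmom : ∫⁻ y, ENNReal.ofReal ((Mw y) ^ s) ∂μ ≠ ⊤)
    (hmom' : ∫⁻ y, ENNReal.ofReal ((Mw y) ^ s) ∂μ' ≠ ⊤)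
    (hKeq : ∀ (a : ℚ_[p]) (η : Fin N → ℚ_[p]), Kf s μ a η = Kf s μ' a η)
    (c : Fin N → ℚ_[p]) :
    ∀ j : ℤ, μ (Slt c ((p:ℝ)^j)) = μ' (Slt c ((p:ℝ)^j)) := by
  classical
  have hppos : (0:ℝ) < (p:ℝ) := by
    have := one_lt_P (p := p); linarith
  have hnorm_zpow : ∀ j : ℤ, ‖((p:ℚ_[p]) ^ (-j))‖ = (p:ℝ)^j := by
    intro j
    rw [norm_zpow, Padic.norm_p, inv_zpow, zpow_neg, inv_inv]
  -- step 1: equality of the L-functionals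
  have hLeq : ∀ j : ℤ, ∫⁻ y, glim s c ((p:ℝ)^j) y ∂μ = ∫⁻ y, glim s c ((p:ℝ)^j) y ∂μ' := by
    intro j
    have hane : ((p:ℚ_[p]) ^ (-j)) ≠ 0 :=
      zpow_ne_zero _ (Nat.cast_ne_zero.2 hp.out.ne_zero)
    have h1 := tendsto_main hs hN μ hmom c hane
    have h2 := tendsto_main hs hN μ' hmom' c hane
    rw [hnorm_zpow j] at h1 h2
    refine tendsto_nhds_unique (Tendsto.congr (fun m => ?_) h1) h2
    rw [← sum_K_eq hs μ c m ((p:ℚ_[p])^(-j)), ← sum_K_eq hs μ' c m ((p:ℚ_[p])^(-j))]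
    congr 1
    exact Finset.sum_congr rfl fun η _ => hKeq _ _
  -- step 2: the recursion
  set t : ℤ → ℝ := fun j => (p:ℝ)^j with htdef
  have htpos : ∀ j, 0 < t j := fun j => zpow_pos hppos j
  have htlt : ∀ j, t j < t (j+1) := fun j =>
    zpow_lt_zpow_right₀ (one_lt_P (p := p)) (by omega)
  set D : ℤ → Set (Fin N → ℚ_[p]) := fun j => Slt c (t (j+1)) \ Slt c (t j) with hDdef
  have hmonoS : ∀ j, Slt c (t j) ⊆ Slt c (t (j+1)) := by
    intro j y hy i
    exact lt_trans (hy i) (htlt j)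
  have hDrc : ∀ j, ∀ y ∈ D j, rc c y = t j := by
    intro j y hy
    obtain ⟨h1, h2⟩ := hy
    have hle : ∀ i, ‖y i - c i‖ ≤ t j := by
      intro i
      exact (Padic.norm_le_pow_iff_norm_lt_pow_add_one _ j).2 (h1 i)
    refine le_antisymm (ciSup_le hle) ?_
    have h2' : ¬ ∀ i, ‖y i - c i‖ < t j := h2
    push_neg at h2'
    obtain ⟨i1, hi1⟩ := h2'
    exact le_trans hi1 (le_rc c y i1)
  have hmeasD : ∀ j, MeasurableSet (D j) :=
    fun j => ((measurableSet_Slt _ _).diff (measurableSet_Slt _ _))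
  have hcompl : ∀ j, (Slt c (t j))ᶜ = (Slt c (t (j+1)))ᶜ ∪ D j := by
    intro j
    ext y
    have himp : y ∈ Slt c (t j) → y ∈ Slt c (t (j+1)) := fun h => hmonoS j h
    simp only [hDdef, Set.mem_compl_iff, Set.mem_union, Set.mem_diff]
    tauto
  have hdisj : ∀ j, Disjoint ((Slt c (t (j+1)))ᶜ) (D j) := by
    intro j
    exact Disjoint.mono_right Set.diff_subset (disjoint_compl_left)
  -- notation for the pieces, for each measure
  set τ : ℤ → ℝ := fun j => (t j) ^ s with hτdef
  have hτpos : ∀ j, 0 < τ j := fun j => Real.rpow_pos_of_pos (htpos j) s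
  have key : ∀ (ρ : Measure (Fin N → ℚ_[p])), IsFiniteMeasure ρ →
      (∫⁻ y, ENNReal.ofReal ((Mw y) ^ s) ∂ρ ≠ ⊤) → ∀ j : ℤ,
      (∫⁻ y, glim s c (t j) y ∂ρ
        = ENNReal.ofReal (τ j) * ρ (Slt c (t j))
          + ∫⁻ y in (Slt c (t j))ᶜ, ENNReal.ofReal (cst p s * (rc c y) ^ s) ∂ρ) ∧
      (∫⁻ y in (Slt c (t j))ᶜ, ENNReal.ofReal (cst p s * (rc c y) ^ s) ∂ρ
        = ∫⁻ y in (Slt c (t (j+1)))ᶜ, ENNReal.ofReal (cst p s * (rc c y) ^ s) ∂ρ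
          + ENNReal.ofReal (cst p s * τ j) * ρ (D j)) ∧
      (ρ (Slt c (t (j+1))) = ρ (Slt c (t j)) + ρ (D j)) ∧
      (∫⁻ y in (Slt c (t j))ᶜ, ENNReal.ofReal (cst p s * (rc c y) ^ s) ∂ρ ≠ ⊤) := by
    intro ρ hfin hmomρ j
    have hBle : ∀ (S : Set (Fin N → ℚ_[p])),
        ∫⁻ y in S, ENNReal.ofReal (cst p s * (rc c y) ^ s) ∂ρ ≠ ⊤ := by
      intro S
      refine ne_of_lt (lt_of_le_of_lt (setLIntegral_le_lintegral _ _) ?_)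
      exact lt_top_iff_ne_top.2 (lint_rc_ne_top hs ρ hmomρ c (cst_pos (p := p) hs).le)
    refine ⟨glim_split ρ c (t j), ?_, ?_, hBle _⟩
    · rw [hcompl j, lintegral_union (hmeasD j) (hdisj j)]
      congr 1
      rw [setLIntegral_congr_fun (hmeasD j)
        (fun y hy => by rw [hDrc j y hy]), setLIntegral_const,
        mul_comm]
    · rw [← Set.union_diff_cancel (hmonoS j), measure_union Set.disjoint_sdiff_right (hmeasD j)]
  -- real sequences
  have keyμ := fun j => key μ inferInstance hmom j
  have keyμ' := fun j => key μ' inferInstance hmom' j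
  set a : ℤ → ℝ := fun j => (μ (Slt c (t j))).toReal with hadef
  set a' : ℤ → ℝ := fun j => (μ' (Slt c (t j))).toReal with ha'def
  set b : ℤ → ℝ := fun j =>
    (∫⁻ y in (Slt c (t j))ᶜ, ENNReal.ofReal (cst p s * (rc c y) ^ s) ∂μ).toReal with hbdef
  set b' : ℤ → ℝ := fun j =>
    (∫⁻ y in (Slt c (t j))ᶜ, ENNReal.ofReal (cst p s * (rc c y) ^ s) ∂μ').toReal with hb'def
  set dm : ℤ → ℝ := fun j => (μ (D j)).toReal with hdmdef
  set dm' : ℤ → ℝ := fun j => (μ' (D j)).toReal with hdm'def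
  have hcstnn : (0:ℝ) ≤ cst p s := (cst_pos (p := p) hs).le
  have e1 : ∀ j, (∫⁻ y, glim s c (t j) y ∂μ).toReal = τ j * a j + b j := by
    intro j
    rw [(keyμ j).1, ENNReal.toReal_add
      (ENNReal.mul_ne_top ENNReal.ofReal_ne_top (measure_ne_top μ _)) ((keyμ j).2.2.2),
      ENNReal.toReal_mul, ENNReal.toReal_ofReal (hτpos j).le]
  have e1' : ∀ j, (∫⁻ y, glim s c (t j) y ∂μ').toReal = τ j * a' j + b' j := by
    intro j
    rw [(keyμ' j).1, ENNReal.toReal_add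
      (ENNReal.mul_ne_top ENNReal.ofReal_ne_top (measure_ne_top μ' _)) ((keyμ' j).2.2.2),
      ENNReal.toReal_mul, ENNReal.toReal_ofReal (hτpos j).le]
  have hLreal : ∀ j, τ j * a j + b j = τ j * a' j + b' j := by
    intro j
    rw [← e1 j, ← e1' j, hLeq j]
  have e2 : ∀ j, a (j+1) = a j + dm j := by
    intro j
    rw [hadef]
    simp only
    rw [(keyμ j).2.2.1, ENNReal.toReal_add (measure_ne_top μ _) (measure_ne_top μ _)]
  have e2' : ∀ j, a' (j+1) = a' j + dm' j := by
    intro j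
    rw [ha'def]
    simp only
    rw [(keyμ' j).2.2.1, ENNReal.toReal_add (measure_ne_top μ' _) (measure_ne_top μ' _)]
  have e3 : ∀ j, b j = b (j+1) + (cst p s * τ j) * dm j := by
    intro j
    rw [hbdef]
    simp only
    rw [(keyμ j).2.1, ENNReal.toReal_add ((keyμ (j+1)).2.2.2)
      (ENNReal.mul_ne_top ENNReal.ofReal_ne_top (measure_ne_top μ _)),
      ENNReal.toReal_mul, ENNReal.toReal_ofReal (by positivity)]
  have e3' : ∀ j, b' j = b' (j+1) + (cst p s * τ j) * dm' j := by
    intro j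
    rw [hb'def]
    simp only
    rw [(keyμ' j).2.1, ENNReal.toReal_add ((keyμ' (j+1)).2.2.2)
      (ENNReal.mul_ne_top ENNReal.ofReal_ne_top (measure_ne_top μ' _)),
      ENNReal.toReal_mul, ENNReal.toReal_ofReal (by positivity)]
  set δ : ℤ → ℝ := fun j => a j - a' j with hδdef
  have hcne : (1:ℝ) - cst p s ≠ 0 := by
    have := cst_lt_one (p := p) hs; linarith
  have hδrec : ∀ j, δ j = (((p:ℝ)^s - cst p s)/(1 - cst p s)) * δ (j+1) := by
    intro j
    have hτsucc : τ (j+1) = τ j * (p:ℝ)^s := by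
      rw [hτdef]
      simp only
      rw [htdef]
      simp only
      rw [zpow_add_one₀ (ne_of_gt hppos), Real.mul_rpow (zpow_pos hppos j).le hppos.le]
    have h1 := hLreal j
    have h2 := hLreal (j+1)
    have h3 := e3 j
    have h3' := e3' j
    have h4 := e2 j
    have h4' := e2' j
    have hτne : τ j ≠ 0 := (hτpos j).ne'
    have hcancel : τ j * ((1 - cst p s) * δ j) = τ j * ((((p:ℝ)^s) - cst p s) * δ (j+1)) := by
      rw [hδdef]
      simp only
      linear_combination h1 - h3 + h3' - h2 + (a (j+1) - a' (j+1)) * hτsucc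
        + (cst p s * τ j) * h4 - (cst p s * τ j) * h4'
    have hmain := mul_left_cancel₀ hτne hcancel
    rw [div_mul_eq_mul_div, eq_div_iff hcne]
    linear_combination hmain
  have hPsr : 1 < (p:ℝ)^s :=
    (Real.one_lt_rpow_iff_of_pos hppos).2 (Or.inl ⟨one_lt_P (p := p), hs⟩)
  have hγ : 1 < ((p:ℝ)^s - cst p s)/(1 - cst p s) := by
    rw [lt_div_iff₀ (by have := cst_lt_one (p := p) hs; linarith)]
    linarith
  have hbd : ∀ j, |δ j| ≤ (μ Set.univ).toReal + (μ' Set.univ).toReal := by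
    intro j
    have h1 : a j ≤ (μ Set.univ).toReal :=
      ENNReal.toReal_mono (measure_ne_top μ _) (measure_mono (Set.subset_univ _))
    have h2 : a' j ≤ (μ' Set.univ).toReal :=
      ENNReal.toReal_mono (measure_ne_top μ' _) (measure_mono (Set.subset_univ _))
    have h3 : 0 ≤ a j := ENNReal.toReal_nonneg
    have h4 : 0 ≤ a' j := ENNReal.toReal_nonneg
    rw [hδdef]
    simp only
    rw [abs_le]
    constructor <;> linarith
  have hzero := seq_zero hγ δ hδrec hbd
  intro j
  have hj := hzero j
  rw [hδdef] at hj
  simp only at hj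
  have : (μ (Slt c (t j))).toReal = (μ' (Slt c (t j))).toReal := by
    rw [hadef, ha'def] at hj
    simp only at hj
    linarith
  exact (ENNReal.toReal_eq_toReal_iff' (measure_ne_top μ _) (measure_ne_top μ' _)).1 this

end Recursion

section Final

variable {N : ℕ}

/-- the collection of closed balls -/
def Cball (p : ℕ) [Fact p.Prime] (N : ℕ) : Set (Set (Fin N → ℚ_[p])) :=
  {S | ∃ (c : Fin N → ℚ_[p]) (j : ℤ), S = {y | ∀ i, ‖y i - c i‖ ≤ (p:ℝ) ^ j}}

lemma ball_eq_Slt (c : Fin N → ℚ_[p]) (j : ℤ) :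
    {y : Fin N → ℚ_[p] | ∀ i, ‖y i - c i‖ ≤ (p:ℝ) ^ j} = Slt c ((p:ℝ) ^ (j+1)) := by
  ext y
  exact forall_congr' fun i => Padic.norm_le_pow_iff_norm_lt_pow_add_one _ j

lemma norm_sub_le_max (u v : ℚ_[p]) : ‖u - v‖ ≤ max ‖u‖ ‖v‖ := by
  rw [sub_eq_add_neg]
  refine le_trans (IsUltrametricDist.norm_add_le_max _ _) ?_
  rw [norm_neg]

lemma isPiSystem_Cball : IsPiSystem (Cball p N) := by
  rintro S1 ⟨c1, j1, rfl⟩ S2 ⟨c2, j2, rfl⟩ ⟨x, hx⟩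
  obtain ⟨hx1, hx2⟩ := hx
  simp only [Set.mem_setOf_eq] at hx1 hx2
  refine ⟨x, min j1 j2, ?_⟩
  have hmono : ∀ {j j' : ℤ}, j ≤ j' → ((p:ℝ) ^ j ≤ (p:ℝ) ^ j') := fun h =>
    zpow_le_zpow_right₀ (one_lt_P (p := p)).le h
  ext y
  simp only [Set.mem_inter_iff, Set.mem_setOf_eq]
  constructor
  · rintro ⟨h1, h2⟩ i
    have k1 : ‖y i - x i‖ ≤ (p:ℝ) ^ j1 := by
      have harg : y i - x i = (y i - c1 i) - (x i - c1 i) := by ring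
      rw [harg]
      exact le_trans (norm_sub_le_max _ _) (max_le (h1 i) (hx1 i))
    have k2 : ‖y i - x i‖ ≤ (p:ℝ) ^ j2 := by
      have harg : y i - x i = (y i - c2 i) - (x i - c2 i) := by ring
      rw [harg]
      exact le_trans (norm_sub_le_max _ _) (max_le (h2 i) (hx2 i))
    rcases le_total j1 j2 with h | h
    · rw [min_eq_left h]; exact k1
    · rw [min_eq_right h]; exact k2
  · intro h
    constructor
    · intro i
      have harg : y i - c1 i = (y i - x i) + (x i - c1 i) := by ring
      rw [harg]
      refine le_trans (IsUltrametricDist.norm_add_le_max _ _) (max_le ?_ (hx1 i))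
      exact le_trans (h i) (hmono (min_le_left _ _))
    · intro i
      have harg : y i - c2 i = (y i - x i) + (x i - c2 i) := by ring
      rw [harg]
      refine le_trans (IsUltrametricDist.norm_add_le_max _ _) (max_le ?_ (hx2 i))
      exact le_trans (h i) (hmono (min_le_right _ _))

lemma borel_eq_Cball :
    (inferInstance : MeasurableSpace (Fin N → ℚ_[p]))
      = MeasurableSpace.generateFrom (Cball p N) := by
  have hppos : (0:ℝ) < (p:ℝ) := by
    have := one_lt_P (p := p); linarith
  have hbasis : TopologicalSpace.IsTopologicalBasis (Cball p N) := by
    refine TopologicalSpace.isTopologicalBasis_of_isOpen_of_nhds ?_ ?_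
    · rintro S ⟨c, j, rfl⟩
      rw [Metric.isOpen_iff]
      intro y hy
      refine ⟨(p:ℝ)^j, zpow_pos hppos j, fun y' hy' => ?_⟩
      intro i
      have hdi : dist (y' i) (y i) < (p:ℝ)^j :=
        (dist_pi_lt_iff (zpow_pos hppos j)).1 hy' i
      rw [dist_eq_norm] at hdi
      have harg : y' i - c i = (y' i - y i) + (y i - c i) := by ring
      rw [harg]
      exact le_trans (IsUltrametricDist.norm_add_le_max _ _) (max_le hdi.le (hy i))
    · intro y U hyU hU
      obtain ⟨ε, hε, hball⟩ := Metric.isOpen_iff.1 hU y hyU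
      obtain ⟨n, hn⟩ := exists_pow_lt_of_lt_one hε (Pinv_lt_one (p := p))
      refine ⟨{y' | ∀ i, ‖y' i - y i‖ ≤ (p:ℝ)^(-(n+1) : ℤ)}, ⟨y, -(n+1 : ℤ), rfl⟩, ?_, ?_⟩
      · intro i
        simp only [sub_self, norm_zero]
        exact (zpow_pos hppos _).le
      · intro y' hy'
        refine hball ?_
        rw [Metric.mem_ball]
        have hzp : (p:ℝ)^(-(n+1) : ℤ) < ε := by
          have h1 : (p:ℝ)^(-(n+1) : ℤ) ≤ (p:ℝ)^(-(n:ℤ)) :=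
            zpow_le_zpow_right₀ (one_lt_P (p := p)).le (by omega)
          have h2 : (p:ℝ)^(-(n:ℤ)) = ((p:ℝ)⁻¹)^n := by
            rw [zpow_neg, zpow_natCast, inv_pow]
          calc (p:ℝ)^(-(n+1) : ℤ) ≤ (p:ℝ)^(-(n:ℤ)) := h1
            _ = ((p:ℝ)⁻¹)^n := h2
            _ < ε := hn
        have hdist : ∀ i, dist (y' i) (y i) < ε := by
          intro i
          rw [dist_eq_norm]
          exact lt_of_le_of_lt (hy' i) hzp
        exact (dist_pi_lt_iff hε).2 hdist
  exact BorelSpace.measurable_eq.trans hbasis.borel_eq_generateFrom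

end Final

end Stmt11Aux





open Stmt11Aux in
/-- For real `s > 0`, `N ≥ 1`, a finite Borel measure `ν` on `ℚ_p^N` with finite moment
`∫ max(1, max_i |y_i|_p)^s dν < ∞`, and bounded nonnegative Borel functions `w`, `w′`:
if `∫ |1 + Σ_i λ_i y_i|_p^s · w(y) dν(y) = ∫ |1 + Σ_i λ_i y_i|_p^s · w′(y) dν(y)` for every
`λ ∈ ℚ_p^N`, then `w = w′` holds `ν`-almost everywhere. -/
theorem stmt11 (p : ℕ) [Fact p.Prime] (N : ℕ) (hN : 1 ≤ N) (s : ℝ) (hs : 0 < s)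
    (ν : Measure (Fin N → ℚ_[p])) [IsFiniteMeasure ν]
    (hmom : ∫⁻ y, ENNReal.ofReal ((max 1 (⨆ i, ‖y i‖)) ^ s) ∂ν < ⊤)
    (w w' : (Fin N → ℚ_[p]) → ℝ)
    (hw : Measurable w) (hw' : Measurable w')
    (hw0 : ∀ y, 0 ≤ w y) (hw0' : ∀ y, 0 ≤ w' y)
    (hwb : ∃ C : ℝ, ∀ y, w y ≤ C) (hwb' : ∃ C : ℝ, ∀ y, w' y ≤ C)
    (heq : ∀ lam : Fin N → ℚ_[p],
      ∫⁻ y, ENNReal.ofReal (‖1 + ∑ i, lam i * y i‖ ^ s * w y) ∂ν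
        = ∫⁻ y, ENNReal.ofReal (‖1 + ∑ i, lam i * y i‖ ^ s * w' y) ∂ν) :
    w =ᵐ[ν] w' := by
  classical
  haveI hne : Nonempty (Fin N) := ⟨⟨0, hN⟩⟩
  obtain ⟨C, hC⟩ := hwb
  obtain ⟨C', hC'⟩ := hwb'
  set W : (Fin N → ℚ_[p]) → ℝ≥0∞ := fun y => ENNReal.ofReal (w y) with hWdef
  set W' : (Fin N → ℚ_[p]) → ℝ≥0∞ := fun y => ENNReal.ofReal (w' y) with hW'def
  have hWmeas : Measurable W := ENNReal.measurable_ofReal.comp hw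
  have hW'meas : Measurable W' := ENNReal.measurable_ofReal.comp hw'
  have hWint : ∫⁻ y, W y ∂ν ≠ ⊤ := by
    refine ne_of_lt (lt_of_le_of_lt
      (lintegral_mono fun y => ENNReal.ofReal_le_ofReal (hC y)) ?_)
    rw [lintegral_const]
    exact ENNReal.mul_lt_top ENNReal.ofReal_lt_top (measure_lt_top ν _)
  have hW'int : ∫⁻ y, W' y ∂ν ≠ ⊤ := by
    refine ne_of_lt (lt_of_le_of_lt
      (lintegral_mono fun y => ENNReal.ofReal_le_ofReal (hC' y)) ?_)
    rw [lintegral_const]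
    exact ENNReal.mul_lt_top ENNReal.ofReal_lt_top (measure_lt_top ν _)
  set μ : Measure (Fin N → ℚ_[p]) := ν.withDensity W with hμdef
  set μ' : Measure (Fin N → ℚ_[p]) := ν.withDensity W' with hμ'def
  haveI : IsFiniteMeasure μ := isFiniteMeasure_withDensity hWint
  haveI : IsFiniteMeasure μ' := isFiniteMeasure_withDensity hW'int
  have hmeasMw : Measurable fun y : Fin N → ℚ_[p] => ENNReal.ofReal ((Mw y) ^ s) :=
    measurable_ofReal_rpow hs continuous_Mw
  -- moments
  have hmomμ : ∫⁻ y, ENNReal.ofReal ((Mw y) ^ s) ∂μ ≠ ⊤ := by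
    rw [hμdef, lintegral_withDensity_eq_lintegral_mul ν hWmeas hmeasMw]
    have hb : ∀ y : Fin N → ℚ_[p], (W * fun z : Fin N → ℚ_[p] => ENNReal.ofReal ((Mw z) ^ s)) y
        ≤ ENNReal.ofReal C * ENNReal.ofReal ((Mw y) ^ s) := fun y =>
      mul_le_mul_left (ENNReal.ofReal_le_ofReal (hC y)) _
    refine ne_of_lt (lt_of_le_of_lt (lintegral_mono hb) ?_)
    rw [lintegral_const_mul' _ _ ENNReal.ofReal_ne_top]
    exact ENNReal.mul_lt_top ENNReal.ofReal_lt_top hmom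
  have hmomμ' : ∫⁻ y, ENNReal.ofReal ((Mw y) ^ s) ∂μ' ≠ ⊤ := by
    rw [hμ'def, lintegral_withDensity_eq_lintegral_mul ν hW'meas hmeasMw]
    have hb : ∀ y : Fin N → ℚ_[p], (W' * fun z : Fin N → ℚ_[p] => ENNReal.ofReal ((Mw z) ^ s)) y
        ≤ ENNReal.ofReal C' * ENNReal.ofReal ((Mw y) ^ s) := fun y =>
      mul_le_mul_left (ENNReal.ofReal_le_ofReal (hC' y)) _
    refine ne_of_lt (lt_of_le_of_lt (lintegral_mono hb) ?_)
    rw [lintegral_const_mul' _ _ ENNReal.ofReal_ne_top]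
    exact ENNReal.mul_lt_top ENNReal.ofReal_lt_top hmom
  -- base equality of the kernels
  have hbase : ∀ lam : Fin N → ℚ_[p], Kf s μ 1 lam = Kf s μ' 1 lam := by
    intro lam
    have hmf : Measurable fun y : Fin N → ℚ_[p] =>
        ENNReal.ofReal (‖(1:ℚ_[p]) + ∑ i, lam i * y i‖ ^ s) := by
      have hcont : Continuous fun y : Fin N → ℚ_[p] => (1:ℚ_[p]) + ∑ i, lam i * y i := by
        fun_prop
      exact measurable_ofReal_rpow hs hcont.norm
    rw [Kf, Kf, hμdef, hμ'def, lintegral_withDensity_eq_lintegral_mul ν hWmeas hmf,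
      lintegral_withDensity_eq_lintegral_mul ν hW'meas hmf]
    have hpt : ∀ y : Fin N → ℚ_[p],
        (W * fun z : Fin N → ℚ_[p] => ENNReal.ofReal (‖(1:ℚ_[p]) + ∑ i, lam i * z i‖ ^ s)) y
        = ENNReal.ofReal (‖1 + ∑ i, lam i * y i‖ ^ s * w y) := by
      intro y
      show ENNReal.ofReal (w y) * ENNReal.ofReal (‖(1:ℚ_[p]) + ∑ i, lam i * y i‖ ^ s)
          = ENNReal.ofReal (‖1 + ∑ i, lam i * y i‖ ^ s * w y)
      rw [← ENNReal.ofReal_mul (hw0 y)]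
      exact congrArg ENNReal.ofReal (mul_comm _ _)
    have hpt' : ∀ y : Fin N → ℚ_[p],
        (W' * fun z : Fin N → ℚ_[p] => ENNReal.ofReal (‖(1:ℚ_[p]) + ∑ i, lam i * z i‖ ^ s)) y
        = ENNReal.ofReal (‖1 + ∑ i, lam i * y i‖ ^ s * w' y) := by
      intro y
      show ENNReal.ofReal (w' y) * ENNReal.ofReal (‖(1:ℚ_[p]) + ∑ i, lam i * y i‖ ^ s)
          = ENNReal.ofReal (‖1 + ∑ i, lam i * y i‖ ^ s * w' y)
      rw [← ENNReal.ofReal_mul (hw0' y)]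
      exact congrArg ENNReal.ofReal (mul_comm _ _)
    rw [lintegral_congr hpt, lintegral_congr hpt']
    exact heq lam
  have hKeq := Kf_eq_of_base hs μ μ' hmomμ hmomμ' hbase
  -- μ = μ'
  have huniv : μ Set.univ = μ' Set.univ := by
    have h10 := hKeq 1 (fun _ => (0:ℚ_[p]))
    rw [Kf, Kf] at h10
    have hsimp : ∀ y : Fin N → ℚ_[p],
        ENNReal.ofReal (‖(1:ℚ_[p]) + ∑ i, (0:ℚ_[p]) * y i‖ ^ s) = 1 := by
      intro y
      simp [Real.one_rpow]
    rw [lintegral_congr hsimp, lintegral_one, lintegral_congr hsimp, lintegral_one] at h10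
    exact h10
  have hmeq : μ = μ' := by
    refine ext_of_generate_finite (Cball p N) borel_eq_Cball isPiSystem_Cball ?_ huniv
    rintro S ⟨c, j, rfl⟩
    rw [ball_eq_Slt]
    exact measure_Slt_eq hs hN μ μ' hmomμ hmomμ' hKeq c (j+1)
  -- conclude
  have hWeq : W =ᵐ[ν] W' :=
    (withDensity_eq_iff hWmeas.aemeasurable hW'meas.aemeasurable hWint).1 hmeq
  filter_upwards [hWeq] with y hy
  exact (ENNReal.ofReal_eq_ofReal_iff (hw0 y) (hw0' y)).1 hy
end

section
/- Let f be a nonzero polynomial in n variables with coefficients in ℤ_p. Then the zero locus {u ∈ ℤ_p^n : f(u) = 0} has Haar measure zero; equivalently, N_k(f)·p^{-kn} → 0 as k → ∞, where N_k(f) is the number of zeros of the reduction of f modulo p^k in (ℤ/p^kℤ)^n. -/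
open MeasureTheory Filter
open scoped ENNReal

variable {p : ℕ} [Fact p.Prime]
noncomputable def padicUnitBall (p : ℕ) [Fact p.Prime] :
    TopologicalSpace.PositiveCompacts ℚ_[p] where
  carrier := Metric.closedBall 0 1
  isCompact' := isCompact_closedBall 0 1
  interior_nonempty' := ⟨0, mem_interior.2 ⟨Metric.ball 0 1, Metric.ball_subset_closedBall,
      Metric.isOpen_ball, Metric.mem_ball_self one_pos⟩⟩
noncomputable def padicHaar (p : ℕ) [Fact p.Prime] : Measure ℚ_[p] :=
  Measure.addHaarMeasure (padicUnitBall p)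
instance : (padicHaar p).IsAddHaarMeasure := Measure.isAddHaarMeasure_addHaarMeasure _

theorem measurableSet_zeroLocus {n : ℕ} (F : MvPolynomial (Fin n) ℚ_[p]) :
    MeasurableSet {u : Fin n → ℚ_[p] | MvPolynomial.eval u F = 0} :=
  (isClosed_singleton.preimage (MvPolynomial.continuous_eval F)).measurableSet

theorem pi_zeroLocus_null (n : ℕ) (F : MvPolynomial (Fin n) ℚ_[p]) (hF : F ≠ 0) :
    Measure.pi (fun _ : Fin n => padicHaar p) {u | MvPolynomial.eval u F = 0} = 0 := by
  induction n with
  | zero =>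
    obtain ⟨c, rfl⟩ := MvPolynomial.C_surjective (Fin 0) F
    have hc : c ≠ 0 := fun h => hF (by rw [h, map_zero])
    convert measure_empty (μ := Measure.pi (fun _ : Fin 0 => padicHaar p))
    ext u
    simp [hc]
  | succ n ih =>
    set π : Measure (Fin n → ℚ_[p]) := Measure.pi (fun _ : Fin n => padicHaar p) with hπ
    set Q := MvPolynomial.finSuccEquiv ℚ_[p] n F with hQdef
    have hQ0 : Q ≠ 0 := by
      simp only [hQdef, ne_eq, EmbeddingLike.map_eq_zero_iff]
      exact hF
    obtain ⟨i, hi⟩ : ∃ i, Q.coeff i ≠ 0 := by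
      by_contra h
      push_neg at h
      exact hQ0 (Polynomial.ext fun i => by simp [h i])
    -- the key slice fact
    have key : ∀ y : Fin n → ℚ_[p], MvPolynomial.eval y (Q.coeff i) ≠ 0 →
        (padicHaar p) {x : ℚ_[p] | MvPolynomial.eval (Fin.cons x y) F = 0} = 0 := by
      intro y hy
      have hq : Q.map (MvPolynomial.eval y) ≠ 0 := fun h => hy (by
        have := Polynomial.coeff_map (MvPolynomial.eval y) i (p := Q)
        rw [h] at this
        simpa using this.symm)
      have hset : {x : ℚ_[p] | MvPolynomial.eval (Fin.cons x y) F = 0}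
          = {x | Polynomial.IsRoot (Q.map (MvPolynomial.eval y)) x} := by
        ext x
        simp [MvPolynomial.eval_eq_eval_mv_eval', Polynomial.IsRoot, hQdef]
      rw [hset]
      exact (Polynomial.finite_setOf_isRoot hq).measure_zero _
    -- Fubini setup
    have e := measurePreserving_piFinSuccAbove (fun _ : Fin (n + 1) => padicHaar p) 0
    set W : Set (ℚ_[p] × (Fin n → ℚ_[p])) :=
      {q | MvPolynomial.eval (Fin.cons q.1 q.2) F = 0} with hW
    have hWm : MeasurableSet W := by
      have hc : Continuous fun q : ℚ_[p] × (Fin n → ℚ_[p]) =>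
          MvPolynomial.eval (Fin.cons q.1 q.2) F := by
        apply (MvPolynomial.continuous_eval F).comp
        apply continuous_pi
        intro j
        refine Fin.cases ?_ (fun j => ?_) j
        · simpa using continuous_fst
        · have hj : Continuous fun q : ℚ_[p] × (Fin n → ℚ_[p]) => q.2 j :=
            (continuous_apply j).comp continuous_snd
          simpa using hj
      exact (isClosed_singleton.preimage hc).measurableSet
    have hpre : (MeasurableEquiv.piFinSuccAbove (fun _ : Fin (n + 1) => ℚ_[p]) 0) ⁻¹' W
        = {u | MvPolynomial.eval u F = 0} := by
      ext u
      have : (Fin.cons (u 0) (fun j => u ((0 : Fin (n+1)).succAbove j)) : Fin (n+1) → ℚ_[p]) = u := by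
        ext j
        refine Fin.cases ?_ (fun j => ?_) j <;> simp [Fin.succAbove]
      have happ : (MeasurableEquiv.piFinSuccAbove (fun _ : Fin (n+1) => ℚ_[p]) 0) u
          = (u 0, fun j => u ((0 : Fin (n+1)).succAbove j)) := rfl
      simp only [Set.mem_preimage, hW, Set.mem_setOf_eq, happ]
      rw [this]
    have step1 : Measure.pi (fun _ : Fin (n + 1) => padicHaar p) {u | MvPolynomial.eval u F = 0}
        = ((padicHaar p).prod π) W := by
      rw [← hpre]
      exact e.measure_preimage hWm.nullMeasurableSet
    rw [step1, Measure.prod_apply_symm hWm]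
    have hae : ∀ᵐ y ∂π, MvPolynomial.eval y (Q.coeff i) ≠ 0 := by
      rw [ae_iff]
      convert ih (Q.coeff i) hi using 2
      simp
    have hz : (fun y => (padicHaar p) ((fun x => (x, y)) ⁻¹' W)) =ᵐ[π] (fun _ => 0) := by
      filter_upwards [hae] with y hy
      exact key y hy
    rw [lintegral_congr_ae hz, lintegral_zero]

theorem haar_zeroLocus_null (n : ℕ) (μ : Measure (Fin n → ℚ_[p])) [μ.IsAddHaarMeasure]
    (F : MvPolynomial (Fin n) ℚ_[p]) (hF : F ≠ 0) :
    μ {u | MvPolynomial.eval u F = 0} = 0 := by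
  rw [Measure.isAddLeftInvariant_eq_smul μ (Measure.pi fun _ : Fin n => padicHaar p),
    Measure.smul_apply, pi_zeroLocus_null n F hF, smul_zero]



theorem eval_map_hom {A : Type*} [CommSemiring A] {n : ℕ} (φ : ℤ_[p] →+* A)
    (v : Fin n → ℤ_[p]) (g : MvPolynomial (Fin n) ℤ_[p]) :
    MvPolynomial.eval (fun j => φ (v j)) (g.map φ) = φ (MvPolynomial.eval v g) := by
  have h := MvPolynomial.eval₂_comp_left φ (RingHom.id ℤ_[p]) v g
  simp only [MvPolynomial.eval₂_id, RingHom.comp_id] at h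
  rw [MvPolynomial.eval_map, h]
  rfl

theorem toZModPow_eq_iff_norm (k : ℕ) (z : ℤ_[p]) (x : ZMod (p ^ k)) :
    PadicInt.toZModPow k z = x ↔
      ‖(z : ℚ_[p]) - ((x.val : ℕ) : ℚ_[p])‖ ≤ (p : ℝ) ^ (-(k : ℤ)) := by
  haveI : NeZero (p ^ k) := ⟨pow_ne_zero k (Nat.Prime.ne_zero Fact.out)⟩
  set c : ℤ_[p] := ((x.val : ℕ) : ℤ_[p]) with hc
  have hcx : PadicInt.toZModPow k c = x := by
    rw [hc, map_natCast]
    exact ZMod.natCast_rightInverse x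
  have h1 : PadicInt.toZModPow k z = x ↔
      z - c ∈ RingHom.ker (PadicInt.toZModPow (p := p) k) := by
    rw [RingHom.mem_ker, map_sub, hcx, sub_eq_zero]
  rw [h1, PadicInt.ker_toZModPow, ← PadicInt.norm_le_pow_iff_mem_span_pow]
  have : ‖z - c‖ = ‖(z : ℚ_[p]) - ((x.val : ℕ) : ℚ_[p])‖ := by
    rw [PadicInt.norm_def, PadicInt.coe_sub, hc, PadicInt.coe_natCast]
  rw [this]

/-- The coset of `(p^k ℤ_p)^n` in `ℤ_p^n ⊆ ℚ_p^n` corresponding to `x : (ZMod p^k)^n`. -/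
def Tset (p : ℕ) [Fact p.Prime] (n k : ℕ) (x : Fin n → ZMod (p ^ k)) :
    Set (Fin n → ℚ_[p]) :=
  {u | ∀ j, ‖u j - ((x j).val : ℚ_[p])‖ ≤ (p : ℝ) ^ (-(k : ℤ))}

theorem norm_le_one_of_mem_Tset {n k : ℕ} {x : Fin n → ZMod (p ^ k)}
    {u : Fin n → ℚ_[p]} (hu : u ∈ Tset p n k x) : ∀ j, ‖u j‖ ≤ 1 := by
  intro j
  have h1 : ‖u j - ((x j).val : ℚ_[p])‖ ≤ 1 :=
    le_trans (hu j) (zpow_le_one_of_nonpos₀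
      (by exact_mod_cast (Fact.out : p.Prime).one_le) (by simp))
  have h2 : ‖(((x j).val : ℕ) : ℚ_[p])‖ ≤ 1 := by
    have := Padic.norm_int_le_one (p := p) ((x j).val : ℤ)
    push_cast at this ⊢
    exact this
  calc ‖u j‖ = ‖(u j - ((x j).val : ℚ_[p])) + ((x j).val : ℚ_[p])‖ := by ring_nf
    _ ≤ max ‖u j - ((x j).val : ℚ_[p])‖ ‖(((x j).val : ℕ) : ℚ_[p])‖ :=
        Padic.nonarchimedean _ _
    _ ≤ 1 := max_le h1 h2

theorem mem_Tset_iff {n k : ℕ} {x : Fin n → ZMod (p ^ k)} {u : Fin n → ℚ_[p]}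
    (hu : ∀ j, ‖u j‖ ≤ 1) :
    u ∈ Tset p n k x ↔ ∀ j, PadicInt.toZModPow k (⟨u j, hu j⟩ : ℤ_[p]) = x j := by
  unfold Tset
  simp only [Set.mem_setOf_eq]
  exact forall_congr' fun j => (toZModPow_eq_iff_norm k ⟨u j, hu j⟩ (x j)).symm

theorem isClosed_Tset (n k : ℕ) (x : Fin n → ZMod (p ^ k)) :
    IsClosed (Tset p n k x) := by
  have : Tset p n k x =
      ⋂ j, (fun u : Fin n → ℚ_[p] => ‖u j - ((x j).val : ℚ_[p])‖) ⁻¹'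
        Set.Iic ((p : ℝ) ^ (-(k : ℤ))) := by
    ext u; simp [Tset]
  rw [this]
  exact isClosed_iInter fun j => IsClosed.preimage
    (((continuous_apply j).sub continuous_const).norm) isClosed_Iic

theorem Tset_disjoint {n k : ℕ} {x y : Fin n → ZMod (p ^ k)} (hxy : x ≠ y) :
    Disjoint (Tset p n k x) (Tset p n k y) := by
  rw [Set.disjoint_left]
  intro u hx hy
  have hu := norm_le_one_of_mem_Tset hx
  apply hxy
  funext j
  rw [← (mem_Tset_iff hu).1 hx j, ← (mem_Tset_iff hu).1 hy j]

theorem measure_Tset_eq {n k : ℕ} (μ : Measure (Fin n → ℚ_[p])) [μ.IsAddHaarMeasure]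
    (x : Fin n → ZMod (p ^ k)) : μ (Tset p n k x) = μ (Tset p n k 0) := by
  haveI : NeZero (p ^ k) := ⟨pow_ne_zero k (Nat.Prime.ne_zero Fact.out)⟩
  have : Tset p n k x =
      (fun u : Fin n → ℚ_[p] => (fun j => -((x j).val : ℚ_[p])) + u) ⁻¹' (Tset p n k 0) := by
    ext u
    simp only [Tset, Set.mem_preimage, Set.mem_setOf_eq, Pi.add_apply, Pi.zero_apply]
    refine forall_congr' fun j => ?_
    rw [ZMod.val_zero]
    push_cast
    rw [sub_zero, neg_add_eq_sub]
  rw [this, measure_preimage_add]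

theorem measure_biUnion_Tset {n k : ℕ} (μ : Measure (Fin n → ℚ_[p])) [μ.IsAddHaarMeasure]
    (s : Finset (Fin n → ZMod (p ^ k))) :
    μ (⋃ x ∈ s, Tset p n k x) = (s.card : ℝ≥0∞) * μ (Tset p n k 0) := by
  rw [measure_biUnion_finset ?hd fun x _ => (isClosed_Tset n k x).measurableSet]
  · rw [Finset.sum_congr rfl fun x _ => measure_Tset_eq μ x, Finset.sum_const,
      nsmul_eq_mul]
  · intro x _ y _ hxy
    exact Tset_disjoint hxy

/-- Repackage `u : Fin n → ℚ_p` with coordinatewise norms `≤ 1` as a tuple of `p`-adic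
integers. -/
def toZp {p : ℕ} [Fact p.Prime] {n : ℕ} {u : Fin n → ℚ_[p]} (h : ∀ j, ‖u j‖ ≤ 1) :
    Fin n → ℤ_[p] := fun j => ⟨u j, h j⟩

/-- The set of `u ∈ ℤ_p^n ⊆ ℚ_p^n` whose reduction mod `p^k` is a zero of `f mod p^k`. -/
def Sset (p : ℕ) [Fact p.Prime] (n : ℕ) (f : MvPolynomial (Fin n) ℤ_[p]) (k : ℕ) :
    Set (Fin n → ℚ_[p]) :=
  {u | ∃ h : ∀ j, ‖u j‖ ≤ 1,
    MvPolynomial.eval (fun j => PadicInt.toZModPow k (⟨u j, h j⟩ : ℤ_[p]))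
      (f.map (PadicInt.toZModPow k)) = 0}

theorem mem_Sset_iff {n : ℕ} (f : MvPolynomial (Fin n) ℤ_[p]) (k : ℕ) (u : Fin n → ℚ_[p]) :
    u ∈ Sset p n f k ↔ ∃ h : ∀ j, ‖u j‖ ≤ 1,
      PadicInt.toZModPow k (MvPolynomial.eval (toZp h) f) = 0 := by
  unfold Sset
  rw [Set.mem_setOf_eq]
  exact exists_congr fun h => by
    rw [show (fun j => PadicInt.toZModPow k (⟨u j, h j⟩ : ℤ_[p]))
        = fun j => PadicInt.toZModPow k (toZp h j) from rfl,
      eval_map_hom (PadicInt.toZModPow k) (toZp h) f]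

theorem Sset_eq_biUnion {n : ℕ} (f : MvPolynomial (Fin n) ℤ_[p]) (k : ℕ) :
    Sset p n f k = ⋃ x ∈ Finset.univ.filter
      (fun x : Fin n → ZMod (p ^ k) =>
        MvPolynomial.eval x (f.map (PadicInt.toZModPow k)) = 0), Tset p n k x := by
  ext u
  simp only [Set.mem_iUnion, Finset.mem_filter, Finset.mem_univ, true_and]
  constructor
  · rintro ⟨h, hz⟩
    exact ⟨fun j => PadicInt.toZModPow k (⟨u j, h j⟩ : ℤ_[p]), ⟨hz, (mem_Tset_iff h).2 fun j => rfl⟩⟩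
  · rintro ⟨x, hx, hu⟩
    have h := norm_le_one_of_mem_Tset hu
    refine ⟨h, ?_⟩
    have := (mem_Tset_iff h).1 hu
    rw [show (fun j => PadicInt.toZModPow k (⟨u j, h j⟩ : ℤ_[p])) = x from funext this]
    exact hx

theorem ball_eq_iUnion_Tset (n k : ℕ) :
    {u : Fin n → ℚ_[p] | ∀ j, ‖u j‖ ≤ 1} = ⋃ x : Fin n → ZMod (p ^ k), Tset p n k x := by
  ext u
  simp only [Set.mem_setOf_eq, Set.mem_iUnion]
  constructor
  · intro h
    exact ⟨fun j => PadicInt.toZModPow k (⟨u j, h j⟩ : ℤ_[p]), (mem_Tset_iff h).2 fun j => rfl⟩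
  · rintro ⟨x, hu⟩
    exact norm_le_one_of_mem_Tset hu

/-- `N_k(f)`: the number of points of `(ℤ/p^kℤ)^n` at which the reduction of
`f ∈ ℤ_p[X_1,…,X_n]` modulo `p^k` vanishes. -/
noncomputable def Nzeros (p : ℕ) [Fact p.Prime] (n : ℕ)
    (f : MvPolynomial (Fin n) ℤ_[p]) (k : ℕ) : ℕ :=
  Nat.card {x : Fin n → ZMod (p ^ k) //
    MvPolynomial.eval x (f.map (PadicInt.toZModPow k)) = 0}

theorem Sset_antitone {n : ℕ} (f : MvPolynomial (Fin n) ℤ_[p]) :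
    Antitone (Sset p n f) := by
  intro k l hkl u hu
  rw [mem_Sset_iff] at hu ⊢
  obtain ⟨h, hz⟩ := hu
  exact ⟨h, by rw [← PadicInt.cast_toZModPow k l hkl, hz, ZMod.cast_zero]⟩

theorem iInter_Sset {n : ℕ} (f : MvPolynomial (Fin n) ℤ_[p]) :
    ⋂ k, Sset p n f k = {u : Fin n → ℚ_[p] | (∀ j, ‖u j‖ ≤ 1) ∧
      MvPolynomial.eval u (f.map (PadicInt.Coe.ringHom)) = 0} := by
  ext u
  simp only [Set.mem_iInter, Set.mem_setOf_eq, mem_Sset_iff]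
  constructor
  · intro hk
    obtain ⟨h, -⟩ := hk 0
    have hz : MvPolynomial.eval (toZp h) f = 0 := by
      rw [← PadicInt.ext_of_toZModPow]
      intro m
      obtain ⟨h', hm⟩ := hk m
      rw [map_zero]
      exact hm
    refine ⟨h, ?_⟩
    have he := eval_map_hom (PadicInt.Coe.ringHom) (toZp h) f
    rw [hz, map_zero] at he
    exact he
  · rintro ⟨h, hz⟩ k
    refine ⟨h, ?_⟩
    have he := eval_map_hom (PadicInt.Coe.ringHom) (toZp h) f
    have : MvPolynomial.eval (toZp h) f = 0 := by
      apply Subtype.coe_injective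
      show PadicInt.Coe.ringHom (MvPolynomial.eval (toZp h) f) = PadicInt.Coe.ringHom 0
      rw [← he, map_zero]
      exact hz
    rw [this, map_zero]

theorem Nzeros_eq {n : ℕ} (f : MvPolynomial (Fin n) ℤ_[p]) (k : ℕ) :
    Nzeros p n f k = (Finset.univ.filter (fun x : Fin n → ZMod (p ^ k) =>
      MvPolynomial.eval x (f.map (PadicInt.toZModPow k)) = 0)).card := by
  haveI : NeZero (p ^ k) := ⟨pow_ne_zero k (Nat.Prime.ne_zero Fact.out)⟩
  rw [Nzeros, Nat.card_eq_fintype_card, Fintype.card_subtype]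

theorem measure_Sset {n : ℕ} (μ : Measure (Fin n → ℚ_[p])) [μ.IsAddHaarMeasure]
    (hμ : μ {u : Fin n → ℚ_[p] | ∀ j, ‖u j‖ ≤ 1} = 1)
    (f : MvPolynomial (Fin n) ℤ_[p]) (k : ℕ) :
    μ (Sset p n f k) = (Nzeros p n f k : ℝ≥0∞) * ((p : ℝ≥0∞) ^ (k * n))⁻¹ := by
  haveI : NeZero (p ^ k) := ⟨pow_ne_zero k (Nat.Prime.ne_zero Fact.out)⟩
  have hcard : ((Finset.univ : Finset (Fin n → ZMod (p ^ k))).card : ℝ≥0∞)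
      = (p : ℝ≥0∞) ^ (k * n) := by
    rw [Finset.card_univ, Fintype.card_fun, ZMod.card, Fintype.card_fin]
    push_cast
    rw [← pow_mul]
  have htot : (p : ℝ≥0∞) ^ (k * n) * μ (Tset p n k 0) = 1 := by
    have h1 := measure_biUnion_Tset μ (Finset.univ : Finset (Fin n → ZMod (p ^ k)))
    rw [hcard] at h1
    rw [← h1]
    simp only [Finset.mem_univ, Set.iUnion_true]
    rw [← ball_eq_iUnion_Tset n k]
    exact hμ
  have hXne : (p : ℝ≥0∞) ^ (k * n) ≠ 0 :=
    pow_ne_zero _ (by exact_mod_cast (Fact.out : p.Prime).ne_zero)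
  have hXtop : (p : ℝ≥0∞) ^ (k * n) ≠ ⊤ := by
    exact ENNReal.pow_ne_top (ENNReal.natCast_ne_top p)
  have hT0 : μ (Tset p n k 0) = ((p : ℝ≥0∞) ^ (k * n))⁻¹ := by
    calc μ (Tset p n k 0)
        = ((p : ℝ≥0∞) ^ (k * n))⁻¹ * ((p : ℝ≥0∞) ^ (k * n)) * μ (Tset p n k 0) := by
          rw [ENNReal.inv_mul_cancel hXne hXtop, one_mul]
      _ = ((p : ℝ≥0∞) ^ (k * n))⁻¹ * ((p : ℝ≥0∞) ^ (k * n) * μ (Tset p n k 0)) := by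
          rw [mul_assoc]
      _ = ((p : ℝ≥0∞) ^ (k * n))⁻¹ := by rw [htot, mul_one]
  rw [Sset_eq_biUnion, measure_biUnion_Tset, hT0, Nzeros_eq]

/-- For a nonzero `f ∈ ℤ_p[X_1,…,X_n]`, the zero locus `{u ∈ ℤ_p^n : f(u) = 0}` has Haar
measure zero; equivalently, `N_k(f)·p^{-kn} → 0` as `k → ∞`. Here `μ` is the Haar measure
on `ℚ_p^n` normalized by `μ(ℤ_p^n) = 1`. -/
theorem stmt12 (p : ℕ) [Fact p.Prime] (n : ℕ)
    (μ : Measure (Fin n → ℚ_[p])) [μ.IsAddHaarMeasure]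
    (hμ : μ {u : Fin n → ℚ_[p] | ∀ j, ‖u j‖ ≤ 1} = 1)
    (f : MvPolynomial (Fin n) ℤ_[p]) (hf : f ≠ 0) :
    μ {u : Fin n → ℚ_[p] | (∀ j, ‖u j‖ ≤ 1) ∧
        MvPolynomial.eval u (f.map (PadicInt.Coe.ringHom)) = 0} = 0 ∧
    Tendsto (fun k : ℕ => (Nzeros p n f k : ℝ) / (p : ℝ) ^ (k * n)) atTop (nhds 0) := by
  have hinj : Function.Injective (PadicInt.Coe.ringHom (p := p)) := fun a b hab =>
    Subtype.coe_injective hab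
  have hF : f.map (PadicInt.Coe.ringHom) ≠ 0 := by
    intro h
    exact hf (MvPolynomial.map_injective PadicInt.Coe.ringHom hinj (by rw [h, map_zero]))
  have part1 : μ {u : Fin n → ℚ_[p] | (∀ j, ‖u j‖ ≤ 1) ∧
      MvPolynomial.eval u (f.map (PadicInt.Coe.ringHom)) = 0} = 0 :=
    measure_mono_null (fun u hu => hu.2) (haar_zeroLocus_null n μ _ hF)
  refine ⟨part1, ?_⟩
  have hmeas : ∀ k, NullMeasurableSet (Sset p n f k) μ := by
    intro k
    rw [Sset_eq_biUnion]
    exact (MeasurableSet.biUnion (Finset.countable_toSet _)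
      fun x _ => (isClosed_Tset n k x).measurableSet).nullMeasurableSet
  have hfin : ∃ k, μ (Sset p n f k) ≠ ⊤ := by
    refine ⟨0, ?_⟩
    rw [measure_Sset μ hμ f 0]
    exact ENNReal.mul_ne_top (ENNReal.natCast_ne_top _)
      (ENNReal.inv_ne_top.2 (pow_ne_zero _ (by exact_mod_cast (Fact.out : p.Prime).ne_zero)))
  have hT := tendsto_measure_iInter_atTop (μ := μ) hmeas (Sset_antitone f) hfin
  rw [iInter_Sset f, part1] at hT
  have h2 : Tendsto (fun k => (μ (Sset p n f k)).toReal) atTop (nhds 0) := by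
    have := (ENNReal.tendsto_toReal (a := 0) (by simp)).comp hT
    exact this
  have heq : (fun k : ℕ => (Nzeros p n f k : ℝ) / (p : ℝ) ^ (k * n))
      = fun k => (μ (Sset p n f k)).toReal := by
    funext k
    rw [measure_Sset μ hμ f k, ENNReal.toReal_mul, ENNReal.toReal_inv]
    simp [div_eq_mul_inv]
  rw [heq]
  exact h2
end
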